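/- arXiv:1009.2316 — 8 statements merged into one kernel-verified Lean document; each statement's English description precedes it below -/
import Mathlib

section
/- Let n be a positive even integer. The real vector space of GL_n(ℝ)-equivariant maps f : (ℙ(ℝⁿ))^{n+1} → ℝ_ε is exactly one-dimensional: there exists a nonzero such map, and any two such maps are proportional (any nonzero one is unique up to scaling by a nonzero real number). -/
open Matrix

noncomputable section

/-- Sign of the determinant of `g` (the character ε of `GL_n(ℝ)`). -/
def eps {n : ℕ} (g : GL (Fin n) ℝ) : ℝ :=
  Real.sign ((g : Matrix (Fin n) (Fin n) ℝ).det)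

/-- Action of `GL n ℝ` on the projective space of `ℝⁿ`. -/
def glAct {n : ℕ} (g : GL (Fin n) ℝ) (x : Projectivization ℝ (Fin n → ℝ)) :
    Projectivization ℝ (Fin n → ℝ) :=
  Projectivization.map (Matrix.mulVecLin (g : Matrix (Fin n) (Fin n) ℝ))
    (fun a b hab => by
      have hab' : (↑g : Matrix (Fin n) (Fin n) ℝ) *ᵥ a = (↑g : Matrix (Fin n) (Fin n) ℝ) *ᵥ b := hab
      have key : ((↑g⁻¹ : Matrix (Fin n) (Fin n) ℝ) * (↑g : Matrix (Fin n) (Fin n) ℝ)) = 1 :=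
        Units.inv_mul g
      calc a = 1 *ᵥ a := (Matrix.one_mulVec a).symm
        _ = (↑g⁻¹ : Matrix (Fin n) (Fin n) ℝ) *ᵥ ((↑g : Matrix (Fin n) (Fin n) ℝ) *ᵥ a) := by
              rw [Matrix.mulVec_mulVec, key]
        _ = (↑g⁻¹ : Matrix (Fin n) (Fin n) ℝ) *ᵥ ((↑g : Matrix (Fin n) (Fin n) ℝ) *ᵥ b) := by
              rw [hab']
        _ = 1 *ᵥ b := by rw [Matrix.mulVec_mulVec, key]
        _ = b := Matrix.one_mulVec b) x

/-- `GL_n(ℝ)`-equivariance with values in the sign module `ℝ_ε`: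
`f(g·x_1,…,g·x_q) = ε(g)·f(x_1,…,x_q)`. -/
def PEquivariant {n q : ℕ} (f : (Fin q → Projectivization ℝ (Fin n → ℝ)) → ℝ) : Prop :=
  ∀ (g : GL (Fin n) ℝ) (x : Fin q → Projectivization ℝ (Fin n → ℝ)),
    f (fun i => glAct g (x i)) = eps g * f x

/-!
The invariant is `x ↦ sign ∏ᵢ det (x₀, …, x̂ᵢ, …, xₙ)`, evaluated on representatives. Rescaling
the representative of `xⱼ` by `c` multiplies the product by `cⁿ`, since `xⱼ` enters `n` of the
minors; as `n` is even the sign is unchanged. Acting by `g` multiplies it by `(det g)ⁿ⁺¹`, whose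
sign is `ε(g)`. Conversely, a tuple not in general position is fixed by a reflection (`ε = -1`),
so every equivariant map vanishes on it, and the tuples in general position form a single orbit
(each is the image of the standard frame `[1 : … : 1], [e₀], …, [eₙ₋₁]`), so an equivariant map
is determined by its value at any one of them.
-/

open scoped LinearAlgebra.Projectivization
open Projectivization Equiv

theorem Fin.prod_prod_succAbove {M : Type*} [CommMonoid M] :
    ∀ {n : ℕ} (f : Fin (n + 1) → M),
      ∏ i : Fin (n + 1), ∏ j : Fin n, f (i.succAbove j) = (∏ k, f k) ^ n
  | 0, f => by simp
  | n + 1, f => by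
    have hrow (i : Fin (n + 1)) :
        ∏ j : Fin (n + 1), f (i.succ.succAbove j) = f 0 * ∏ j : Fin n, f (i.succAbove j).succ := by
      rw [Fin.prod_univ_succ, Fin.succ_succAbove_zero]
      simp only [Fin.succ_succAbove_succ]
    rw [Fin.prod_univ_succ, Fin.succAbove_zero, Fintype.prod_congr _ _ hrow,
      Finset.prod_mul_distrib, Fin.prod_prod_succAbove (fun k => f k.succ), Finset.prod_const,
      Finset.card_univ, Fintype.card_fin, Fin.prod_univ_succ f, mul_pow, pow_succ, pow_succ]
    ac_rfl

theorem Real.sign_eq_coe_sign (r : ℝ) : Real.sign r = (SignType.sign r : ℝ) := by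
  rcases lt_trichotomy r 0 with h | rfl | h
  · simp [Real.sign_of_neg h, h]
  · simp [Real.sign_zero]
  · simp [Real.sign_of_pos h, h]

theorem Real.sign_pow_even_mul {n : ℕ} (hn : Even n) {a : ℝ} (ha : a ≠ 0) (b : ℝ) :
    Real.sign (a ^ n * b) = Real.sign b := by
  rw [Real.sign_eq_coe_sign, Real.sign_eq_coe_sign, sign_mul, sign_pow,
    SignType.pow_even _ hn (sign_ne_zero.2 ha), one_mul]

theorem Real.sign_pow_odd_mul {n : ℕ} (hn : Odd n) (a b : ℝ) :
    Real.sign (a ^ n * b) = Real.sign a * Real.sign b := by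
  simp only [Real.sign_eq_coe_sign, sign_mul, sign_pow, SignType.pow_odd _ hn, SignType.coe_mul]

theorem Matrix.span_rows_ne_top_of_det_eq_zero {K ι : Type*} [Field K] [Fintype ι]
    [DecidableEq ι] {A : Matrix ι ι K} (hA : A.det = 0) :
    Submodule.span K (Set.range A.row) ≠ ⊤ := fun htop =>
  (isUnit_iff_ne_zero.1 (A.isUnit_iff_isUnit_det.1 (linearIndependent_rows_iff_isUnit.1
    (linearIndependent_of_top_le_span_of_card_eq_finrank htop.ge (by simp))))) hA

theorem Matrix.exists_det_eq_neg_one_of_notMem {K ι : Type*} [Field K] [Fintype ι]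
    [DecidableEq ι] (W : Submodule K (ι → K)) {u : ι → K} (hu : u ∉ W) :
    ∃ G : Matrix ι ι K, G.det = -1 ∧ (∀ w ∈ W, G *ᵥ w = w) ∧ G *ᵥ u = -u := by
  obtain ⟨φ, hφu, hWφ⟩ := W.exists_le_ker_of_notMem hu
  set p : ι → K := fun k => φ fun j => if k = j then 1 else 0
  have hp : ∀ w, p ⬝ᵥ w = φ w := fun w => by
    simp [p, dotProduct, LinearMap.pi_apply_eq_sum_univ φ w, mul_comm]
  refine ⟨1 + vecMulVec (-(2 / φ u) • u) p, ?_, fun w hw => ?_, ?_⟩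
  · rw [vecMulVec_eq Unit, det_one_add_replicateCol_mul_replicateRow, dotProduct_smul, hp,
      smul_eq_mul]
    field_simp
    ring
  · rw [add_mulVec, one_mulVec, vecMulVec_mulVec, hp, LinearMap.mem_ker.1 (hWφ hw)]
    simp
  · rw [add_mulVec, one_mulVec, vecMulVec_mulVec, hp, op_smul_eq_smul, smul_smul,
      mul_neg, mul_div_cancel₀ _ hφu]
    module

namespace SignEquivariant

section Minors

variable {R : Type*} [CommRing R] {n : ℕ}

def minor (v : Fin (n + 1) → Fin n → R) (i : Fin (n + 1)) : R :=
  (Matrix.of fun j => v (i.succAbove j)).det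

def minorProd (v : Fin (n + 1) → Fin n → R) : R :=
  ∏ i, minor v i

theorem minor_smul (c : Fin (n + 1) → R) (v : Fin (n + 1) → Fin n → R) (i : Fin (n + 1)) :
    minor (fun j => c j • v j) i = (∏ j, c (i.succAbove j)) * minor v i := by
  rw [minor, minor, ← det_mul_column]
  rfl

theorem minorProd_smul (c : Fin (n + 1) → R) (v : Fin (n + 1) → Fin n → R) :
    minorProd (fun j => c j • v j) = (∏ k, c k) ^ n * minorProd v := by
  simp only [minorProd, minor_smul, Finset.prod_mul_distrib, Fin.prod_prod_succAbove]

theorem minor_mulVec (G : Matrix (Fin n) (Fin n) R) (v : Fin (n + 1) → Fin n → R)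
    (i : Fin (n + 1)) : minor (fun j => G *ᵥ v j) i = minor v i * G.det := by
  have : (Matrix.of fun j => G *ᵥ v (i.succAbove j)) =
      (Matrix.of fun j => v (i.succAbove j)) * Gᵀ := by
    ext j k
    simp [Matrix.mul_apply, Matrix.mulVec, dotProduct, mul_comm]
  rw [minor, this, det_mul, det_transpose, minor]

theorem minorProd_mulVec (G : Matrix (Fin n) (Fin n) R) (v : Fin (n + 1) → Fin n → R) :
    minorProd (fun j => G *ᵥ v j) = G.det ^ (n + 1) * minorProd v := by
  simp only [minorProd, minor_mulVec, Finset.prod_mul_distrib, Finset.prod_const,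
    Finset.card_univ, Fintype.card_fin, mul_comm]

theorem updateRow_succ_eq_submatrix {α : Type*} (v : Fin (n + 1) → Fin n → α) (m : Fin n) :
    (Matrix.of (v ∘ Fin.succ)).updateRow m (v 0) =
      (Matrix.of fun j => v (m.succ.succAbove j)).submatrix m.cycleRange id := by
  ext k l
  rcases eq_or_ne k m with rfl | hk
  · simp
  · simp [swap_apply_of_ne_of_ne, hk, Fin.succ_ne_zero]

theorem coeff_mul_minor_zero_eq (v : Fin (n + 1) → Fin n → R) {c : Fin n → R}
    (hc : c ᵥ* Matrix.of (v ∘ Fin.succ) = v 0) (m : Fin n) :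
    c m * minor v 0 = Perm.sign m.cycleRange * minor v m.succ := by
  rw [minor, minor, ← det_permute, ← updateRow_succ_eq_submatrix, ← hc, vecMul_eq_sum,
    det_updateRow_sum, smul_eq_mul]
  rfl

end Minors

variable {n : ℕ}

theorem _root_.PEquivariant.apply_smul {q : ℕ} {f : (Fin q → ℙ ℝ (Fin n → ℝ)) → ℝ}
    (hf : PEquivariant f) (g : GL (Fin n) ℝ) (x : Fin q → ℙ ℝ (Fin n → ℝ)) :
    f (fun j => g • x j) = eps g * f x :=
  hf g x

def signInvariant (x : Fin (n + 1) → ℙ ℝ (Fin n → ℝ)) : ℝ :=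
  Real.sign (minorProd fun j => (x j).rep)

theorem signInvariant_mk (he : Even n) (v : Fin (n + 1) → Fin n → ℝ) (hv : ∀ j, v j ≠ 0) :
    signInvariant (fun j => mk ℝ (v j) (hv j)) = Real.sign (minorProd v) := by
  choose a ha using fun j => exists_smul_eq_mk_rep ℝ (v j) (hv j)
  simp only [signInvariant, ← ha, Units.smul_def, minorProd_smul]
  exact Real.sign_pow_even_mul he (Finset.prod_ne_zero_iff.2 fun j _ => (a j).ne_zero) _

theorem signInvariant_smul (he : Even n) (g : GL (Fin n) ℝ)
    (x : Fin (n + 1) → ℙ ℝ (Fin n → ℝ)) :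
    signInvariant (fun j => g • x j) = eps g * signInvariant x := by
  have hgx : (fun j => g • x j) =
      fun j => mk ℝ (g • (x j).rep) ((smul_ne_zero_iff_ne g).2 (x j).rep_nonzero) :=
    funext fun j => by rw [← smul_mk _ (x j).rep_nonzero, mk_rep]
  rw [hgx, signInvariant_mk he]
  exact (congrArg Real.sign (minorProd_mulVec (g : Matrix (Fin n) (Fin n) ℝ) _)).trans
    (Real.sign_pow_odd_mul he.add_one _ _)

theorem signInvariant_equivariant (he : Even n) :
    PEquivariant (signInvariant : (Fin (n + 1) → ℙ ℝ (Fin n → ℝ)) → ℝ) :=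
  signInvariant_smul he

theorem signInvariant_ne_zero (hn : 0 < n) (he : Even n) :
    (signInvariant : (Fin (n + 1) → ℙ ℝ (Fin n → ℝ)) → ℝ) ≠ 0 := by
  set t : Fin (n + 1) → Fin n → ℝ := fun j k => ((j : ℕ) : ℝ) ^ (k : ℕ)
  have ht (j) : t j ≠ 0 := fun h => by simpa [t] using congrFun h ⟨0, hn⟩
  refine Function.ne_iff.2 ⟨fun j => mk ℝ (t j) (ht j), ?_⟩
  rw [Pi.zero_apply, signInvariant_mk he, Ne, Real.sign_eq_zero_iff]
  refine Finset.prod_ne_zero_iff.2 fun i _ => det_vandermonde_ne_zero_iff.2 ?_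
  exact Nat.cast_injective.comp (Fin.val_injective.comp Fin.succAbove_right_injective)

theorem smul_mk_eq_of_mulVec_eq_smul (g : GL (Fin n) ℝ) {v : Fin n → ℝ} (hv : v ≠ 0) {a : ℝ}
    (h : (g : Matrix (Fin n) (Fin n) ℝ) *ᵥ v = a • v) : g • mk ℝ v hv = mk ℝ v hv :=
  (mk_eq_mk_iff' ℝ _ _ _ _).2 ⟨a, h.symm⟩

theorem _root_.PEquivariant.eq_zero_of_smul_eq {q : ℕ} {f : (Fin q → ℙ ℝ (Fin n → ℝ)) → ℝ}
    (hf : PEquivariant f) {g : GL (Fin n) ℝ} (hg : eps g = -1) {x : Fin q → ℙ ℝ (Fin n → ℝ)}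
    (hx : ∀ j, g • x j = x j) : f x = 0 := by
  have := hf.apply_smul g x
  rw [funext hx, hg] at this
  linarith

/-- Every `n` of the `n + 1` points are linearly independent. -/
def GeneralPosition (x : Fin (n + 1) → ℙ ℝ (Fin n → ℝ)) : Prop :=
  ∀ i, minor (fun j => (x j).rep) i ≠ 0

theorem exists_eps_eq_neg_one_smul_eq_of_not_generalPosition
    {x : Fin (n + 1) → ℙ ℝ (Fin n → ℝ)} (hx : ¬GeneralPosition x) :
    ∃ g : GL (Fin n) ℝ, eps g = -1 ∧ ∀ j, g • x j = x j := by
  obtain ⟨i, hi⟩ : ∃ i, minor (fun j => (x j).rep) i = 0 := by simpa [GeneralPosition] using hx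
  set v := fun j => (x j).rep
  set W := Submodule.span ℝ (Set.range fun j => v (i.succAbove j))
  have hW : W ≠ ⊤ := span_rows_ne_top_of_det_eq_zero hi
  have hvW (j) (hj : j ≠ i) : v j ∈ W := by
    obtain ⟨k, rfl⟩ := Fin.exists_succAbove_eq hj
    exact Submodule.subset_span ⟨k, rfl⟩
  obtain ⟨u, hu, hiu⟩ : ∃ u ∉ W, v i ∈ W ∨ u = v i := by
    by_cases hvi : v i ∈ W
    · obtain ⟨u, hu⟩ := not_forall.1 (mt Submodule.eq_top_iff'.2 hW)
      exact ⟨u, hu, Or.inl hvi⟩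
    · exact ⟨v i, hvi, Or.inr rfl⟩
  obtain ⟨G, hGdet, hGW, hGu⟩ := exists_det_eq_neg_one_of_notMem W hu
  have hG : G.det ≠ 0 := by simp [hGdet]
  refine ⟨GeneralLinearGroup.mkOfDetNeZero G hG, ?_, fun j => ?_⟩
  · exact (congrArg Real.sign hGdet).trans (Real.sign_of_neg (by norm_num))
  rw [← (x j).mk_rep]
  by_cases hj : j = i
  · subst hj
    rcases hiu with h | rfl
    · exact smul_mk_eq_of_mulVec_eq_smul _ _ (a := 1) ((hGW _ h).trans (one_smul _ _).symm)
    · exact smul_mk_eq_of_mulVec_eq_smul _ _ (a := -1) (hGu.trans (neg_one_smul _ _).symm)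
  · exact smul_mk_eq_of_mulVec_eq_smul _ _ (a := 1) ((hGW _ (hvW j hj)).trans (one_smul _ _).symm)

theorem _root_.PEquivariant.eq_zero_of_not_generalPosition
    {f : (Fin (n + 1) → ℙ ℝ (Fin n → ℝ)) → ℝ} (hf : PEquivariant f)
    {x : Fin (n + 1) → ℙ ℝ (Fin n → ℝ)} (hx : ¬GeneralPosition x) : f x = 0 := by
  obtain ⟨g, hg, hgx⟩ := exists_eps_eq_neg_one_smul_eq_of_not_generalPosition hx
  exact hf.eq_zero_of_smul_eq hg hgx

def stdFrame (hn : 0 < n) : Fin (n + 1) → ℙ ℝ (Fin n → ℝ) :=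
  Fin.cons (mk ℝ 1 fun h => one_ne_zero (congrFun h ⟨0, hn⟩))
    fun m => mk ℝ (Pi.single m 1) (by simp)

theorem exists_smul_stdFrame_eq (hn : 0 < n) {x : Fin (n + 1) → ℙ ℝ (Fin n → ℝ)}
    (hx : GeneralPosition x) : ∃ g : GL (Fin n) ℝ, ∀ i, g • stdFrame hn i = x i := by
  set v := fun j => (x j).rep
  set A : Matrix (Fin n) (Fin n) ℝ := Matrix.of (v ∘ Fin.succ)
  have hA : A.det ≠ 0 := hx 0
  set c := v 0 ᵥ* A⁻¹
  have hc : c ᵥ* A = v 0 := by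
    rw [vecMul_vecMul, nonsing_inv_mul _ (isUnit_iff_ne_zero.2 hA), vecMul_one]
  have hc0 (m : Fin n) : c m ≠ 0 := fun h => hx m.succ <| by
    simpa [h] using coeff_mul_minor_zero_eq v hc m
  set G := Aᵀ * diagonal c
  have hG : G.det ≠ 0 := by simp [G, det_diagonal, hA, Finset.prod_ne_zero_iff, hc0]
  refine ⟨GeneralLinearGroup.mkOfDetNeZero G hG, fun i => ?_⟩
  rw [← (x i).mk_rep]
  induction i using Fin.cases with
  | zero =>
    refine (mk_eq_mk_iff' ℝ _ _ _ _).2 ⟨1, ?_⟩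
    show 1 • v 0 = G *ᵥ 1
    have hc1 : diagonal c *ᵥ 1 = c := funext fun k => by simp [mulVec_diagonal]
    rw [one_smul, ← mulVec_mulVec, hc1, mulVec_transpose, hc]
  | succ m =>
    refine (mk_eq_mk_iff' ℝ _ _ _ _).2 ⟨c m, ?_⟩
    show c m • v m.succ = G *ᵥ Pi.single m 1
    rw [← mulVec_mulVec, diagonal_mulVec_single, mul_one, mulVec_transpose, single_vecMul]
    rfl

theorem exists_smul_eq_of_generalPosition (hn : 0 < n) {x y : Fin (n + 1) → ℙ ℝ (Fin n → ℝ)}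
    (hx : GeneralPosition x) (hy : GeneralPosition y) :
    ∃ g : GL (Fin n) ℝ, ∀ i, g • x i = y i := by
  obtain ⟨a, ha⟩ := exists_smul_stdFrame_eq hn hx
  obtain ⟨b, hb⟩ := exists_smul_stdFrame_eq hn hy
  refine ⟨b * a⁻¹, fun i => ?_⟩
  rw [mul_smul, ← ha, inv_smul_smul, hb]

end SignEquivariant

/-- for `n` positive and even, the space of `GL_n(ℝ)`-equivariant maps
`(ℙ(ℝⁿ))^{n+1} → ℝ_ε` is exactly one-dimensional: a nonzero such map exists, and any
such map is a (unique) scalar multiple of any given nonzero one. -/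
theorem stmt0 (n : ℕ) (hn : 0 < n) (he : Even n) :
    (∃ f : (Fin (n + 1) → Projectivization ℝ (Fin n → ℝ)) → ℝ, PEquivariant f ∧ f ≠ 0) ∧
    (∀ f g : (Fin (n + 1) → Projectivization ℝ (Fin n → ℝ)) → ℝ,
      PEquivariant f → PEquivariant g → g ≠ 0 →
        ∃! c : ℝ, f = fun x => c * g x) := by
  refine ⟨⟨SignEquivariant.signInvariant, SignEquivariant.signInvariant_equivariant he,
    SignEquivariant.signInvariant_ne_zero hn he⟩, ?_⟩
  intro f g hf hg hg0
  obtain ⟨x, hgx⟩ : ∃ x, g x ≠ 0 := Function.ne_iff.1 hg0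
  have hx : SignEquivariant.GeneralPosition x :=
    by_contra fun h => hgx (hg.eq_zero_of_not_generalPosition h)
  refine ⟨f x / g x, funext fun y => ?_, fun c hc => by rw [hc]; field_simp⟩
  by_cases hy : SignEquivariant.GeneralPosition y
  · obtain ⟨k, hk⟩ := SignEquivariant.exists_smul_eq_of_generalPosition hn hx hy
    rw [← funext hk, hf.apply_smul, hg.apply_smul]
    field_simp
  · rw [hf.eq_zero_of_not_generalPosition hy, hg.eq_zero_of_not_generalPosition hy, mul_zero]

end
end

section
/- Let n be a positive even integer and q ≤ n. Every GL_n(ℝ)-equivariant map f : (ℙ(ℝⁿ))^{q} → ℝ_ε is identically zero. -/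
open Matrix

noncomputable section

/-!
An `ℝ_ε`-valued equivariant map vanishes at every tuple of lines that is fixed pointwise by some
`g` with `det g < 0`, since there `f x = ε(g) f x = -f x`. Such a `g` exists for `q ≤ n` lines:
extend a basis of their span, taken among the lines themselves, to a basis of `ℝⁿ`. If some basis
vector is not one of the lines, the reflection negating it fixes their span pointwise; otherwise
the lines are the whole basis, and negating any one basis vector maps each line to itself.
-/

namespace Module.Basis

variable {K V κ : Type*} [Field K] [AddCommGroup V] [Module K V] [Fintype κ] [DecidableEq κ]

def reflectionAt (b : Basis κ K V) (k : κ) : V →ₗ[K] V :=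
  Matrix.toLin b b (Matrix.diagonal (Function.update (1 : κ → K) k (-1)))

variable (b : Basis κ K V) (k : κ)

theorem det_reflectionAt : LinearMap.det (b.reflectionAt k) = -1 := by
  rw [reflectionAt, LinearMap.det_toLin, Matrix.det_diagonal,
    Finset.prod_update_of_mem (Finset.mem_univ k)]
  simp

theorem reflectionAt_apply_basis (j : κ) :
    b.reflectionAt k (b j) = Function.update (1 : κ → K) k (-1) j • b j := by
  rw [reflectionAt, Matrix.toLin_self, Finset.sum_eq_single j]
  · rw [Matrix.diagonal_apply_eq]
  · intro i _ hij
    rw [Matrix.diagonal_apply_ne _ hij, zero_smul]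
  · simp

theorem reflectionAt_self : b.reflectionAt k (b k) = -b k := by
  simp [reflectionAt_apply_basis]

theorem reflectionAt_apply_of_coord_eq_zero {x : V} (hx : b.coord k x = 0) :
    b.reflectionAt k x = x := by
  have key : b.reflectionAt k = LinearMap.id - (2 : K) • (b.coord k).smulRight (b k) := by
    refine b.ext fun j => ?_
    rcases eq_or_ne j k with rfl | hjk
    · simp [reflectionAt_self, two_smul]
    · simp [reflectionAt_apply_basis, hjk]
  simp [key, hx]

end Module.Basis

open Module Set Submodule in
theorem exists_basis_coord_eq_zero_or_eq {K V ι : Type*} [Field K] [AddCommGroup V] [Module K V]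
    [FiniteDimensional K V] [Finite ι] (v : ι → V) (hcard : Nat.card ι ≤ finrank K V)
    (hpos : 0 < finrank K V) :
    ∃ (t : Set V) (b : Basis t K V) (k : t), ∀ i, b.coord k (v i) = 0 ∨ v i = b k := by
  obtain ⟨s, hsv, hspan, hli⟩ := exists_linearIndependent K (range v)
  replace hli : LinearIndepOn K id s := hli
  set t := hli.extend (subset_univ s)
  let b : Basis t K V := Basis.extend hli
  have hb : ∀ j, b j = j := fun j => by rw [Basis.coe_extend]
  have coord_eq_zero : ∀ j k : t, j ≠ k → b.coord k j = 0 := fun j k hjk => by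
    rw [← hb, Basis.coord_apply, Basis.repr_self, Finsupp.single_eq_of_ne hjk.symm]
  by_cases h : ∃ k : t, (k : V) ∉ s
  · obtain ⟨k, hk⟩ := h
    refine ⟨t, b, k, fun i => Or.inl ?_⟩
    have hker : span K s ≤ LinearMap.ker (b.coord k) := span_le.mpr fun w hw =>
      coord_eq_zero ⟨w, hli.subset_extend _ hw⟩ k fun hwk => hk (hwk ▸ hw)
    exact hker (hspan ▸ subset_span (mem_range_self i))
  · push Not at h
    have hcard_t : Nat.card t = finrank K V := (finrank_eq_nat_card_basis b).symm
    have ht : t = range v := by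
      refine eq_of_subset_of_ncard_le (fun w hw => hsv (h ⟨w, hw⟩)) ?_ (finite_range v)
      rw [← Nat.card_coe_set_eq, ← Nat.card_coe_set_eq, hcard_t]
      exact (Finite.card_range_le v).trans hcard
    obtain ⟨k⟩ : Nonempty t := Nat.card_pos_iff.mp (hcard_t ▸ hpos) |>.1
    refine ⟨t, b, k, fun i => ?_⟩
    let j : t := ⟨v i, ht ▸ mem_range_self i⟩
    by_cases hjk : j = k
    · exact Or.inr (hjk ▸ (hb j).symm)
    · exact Or.inl (coord_eq_zero j k hjk)

theorem exists_det_eq_neg_one_forall_eq_or_eq_neg {K V ι : Type*} [Field K] [AddCommGroup V]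
    [Module K V] [FiniteDimensional K V] [Finite ι] (v : ι → V)
    (hcard : Nat.card ι ≤ Module.finrank K V) (hpos : 0 < Module.finrank K V) :
    ∃ σ : V →ₗ[K] V, LinearMap.det σ = -1 ∧ ∀ i, σ (v i) = v i ∨ σ (v i) = -v i := by
  classical
  obtain ⟨t, b, k, h⟩ := exists_basis_coord_eq_zero_or_eq v hcard hpos
  have := FiniteDimensional.fintypeBasisIndex b
  exact ⟨b.reflectionAt k, b.det_reflectionAt k, fun i => (h i).imp
    (b.reflectionAt_apply_of_coord_eq_zero k) fun hv => by rw [hv, b.reflectionAt_self]⟩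

theorem glAct_mk_eq_self {n : ℕ} {g : GL (Fin n) ℝ} {v : Fin n → ℝ} (hv : v ≠ 0) {c : ℝ}
    (h : (g : Matrix (Fin n) (Fin n) ℝ) *ᵥ v = c • v) :
    glAct g (Projectivization.mk ℝ v hv) = Projectivization.mk ℝ v hv :=
  (Projectivization.map_mk _ _ v hv).trans
    ((Projectivization.mk_eq_mk_iff' ℝ _ _ _ hv).mpr ⟨c, h.symm⟩)

theorem exists_eps_eq_neg_one_forall_glAct_eq {n q : ℕ} (hn : 0 < n) (hq : q ≤ n)
    (x : Fin q → Projectivization ℝ (Fin n → ℝ)) :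
    ∃ g : GL (Fin n) ℝ, eps g = -1 ∧ ∀ i, glAct g (x i) = x i := by
  obtain ⟨σ, hdet, hσ⟩ := exists_det_eq_neg_one_forall_eq_or_eq_neg (K := ℝ) (fun i => (x i).rep)
    (by simpa using hq) (by simpa using hn)
  have hM : (LinearMap.toMatrix' σ).det = -1 := by rw [LinearMap.det_toMatrix', hdet]
  refine ⟨.mkOfDetNeZero (LinearMap.toMatrix' σ) (by simp [hM]), ?_, fun i => ?_⟩
  · change Real.sign (LinearMap.toMatrix' σ).det = -1
    rw [hM, Real.sign_of_neg (by norm_num)]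
  · rw [← (x i).mk_rep]
    rcases hσ i with h | h
    · exact glAct_mk_eq_self _ (c := 1) (by simpa [LinearMap.toMatrix'_mulVec] using h)
    · exact glAct_mk_eq_self _ (c := -1) (by simpa [LinearMap.toMatrix'_mulVec] using h)

theorem stmt1_general (n q : ℕ) (hn : 0 < n) (hq : q ≤ n)
    (f : (Fin q → Projectivization ℝ (Fin n → ℝ)) → ℝ) (hf : PEquivariant f) :
    f = 0 := by
  funext x
  obtain ⟨g, hg, hfix⟩ := exists_eps_eq_neg_one_forall_glAct_eq hn hq x
  have h := hf g x
  simp only [hfix, hg] at h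
  show f x = 0
  linarith

/-- for `n` positive and even and `q ≤ n`, every `GL_n(ℝ)`-equivariant map
`(ℙ(ℝⁿ))^q → ℝ_ε` is identically zero. -/
theorem stmt1 (n q : ℕ) (hn : 0 < n) (he : Even n) (hq : q ≤ n)
    (f : (Fin q → Projectivization ℝ (Fin n → ℝ)) → ℝ) (hf : PEquivariant f) :
    f = 0 :=
  stmt1_general n q hn hq f hf

end
end

section
/- Let n be a positive even integer. Every GL_n(ℝ)-equivariant map f : (ℙ(ℝⁿ))^{n+1} → ℝ_ε vanishes on every (n+1)-tuple (x_0,…,x_n) of points of ℙ(ℝⁿ) that is not hereditarily spanning. -/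
open Matrix

noncomputable section

/-- A `k`-tuple of projective points is hereditarily spanning if every `n` of the
corresponding lines together span `ℝⁿ`. -/
def HerSpanP {n k : ℕ} (x : Fin k → Projectivization ℝ (Fin n → ℝ)) : Prop :=
  ∀ s : Finset (Fin k), s.card = n → (⨆ i ∈ s, (x i).submodule) = ⊤

/-! If all points of the tuple except `x j` lie in a proper subspace `U`, choose a linear
reflection `y ↦ y - φ y • v` with `φ v = 2` and `U ≤ ker φ`, where either `φ (x j) = 0` or
`v = x j`. It fixes every point of the tuple and has determinant `-1`, so equivariance gives
`f x = -f x`. -/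

theorem Submodule.exists_dual_apply_eq_of_notMem {K V : Type*} [Field K] [AddCommGroup V]
    [Module K V] {U : Submodule K V} {w : V} (hw : w ∉ U) (c : K) :
    ∃ f : Module.Dual K V, f w = c ∧ U ≤ LinearMap.ker f := by
  obtain ⟨f, hfw, hfU⟩ := U.exists_dual_map_eq_bot_of_notMem hw inferInstance
  refine ⟨(c / f w) • f, by simp [hfw], fun u hu => ?_⟩
  have : f u = 0 := by simpa [hfU] using Submodule.mem_map_of_mem (f := f) hu
  simp [this]

theorem Submodule.exists_reflection_fixing_and_apply_eq_or_eq_neg {K V : Type*} [Field K]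
    [AddCommGroup V] [Module K V] {U : Submodule K V} (hU : U ≠ ⊤) (w : V) :
    ∃ (f : Module.Dual K V) (v : V) (h : f v = 2), (∀ u ∈ U, Module.reflection h u = u) ∧
      (Module.reflection h w = w ∨ Module.reflection h w = -w) := by
  have fixes_ker {f : Module.Dual K V} {v : V} (h : f v = 2) {u : V} (hu : f u = 0) :
      Module.reflection h u = u := by
    simp [Module.reflection_apply, hu]
  by_cases hw : w ∈ U
  · obtain ⟨v, hv⟩ : ∃ v, v ∉ U := by
      by_contra! h
      exact hU (Submodule.eq_top_iff'.2 h)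
    obtain ⟨f, hfv, hfU⟩ := U.exists_dual_apply_eq_of_notMem hv 2
    exact ⟨f, v, hfv, fun u hu => fixes_ker hfv (hfU hu), Or.inl (fixes_ker hfv (hfU hw))⟩
  · obtain ⟨f, hfw, hfU⟩ := U.exists_dual_apply_eq_of_notMem hw 2
    exact ⟨f, w, hfw, fun u hu => fixes_ker hfw (hfU hu),
      Or.inr (Module.reflection_apply_self hfw)⟩

theorem Module.det_reflection {R M : Type*} [CommRing R] [AddCommGroup M] [Module R M]
    [Module.Free R M] [Module.Finite R M] {f : Module.Dual R M} {x : M} (h : f x = 2) :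
    LinearMap.det (Module.reflection h).toLinearMap = -1 := by
  have : (Module.reflection h).toLinearMap = LinearMap.transvection (-f) x := by
    ext y
    simp [Module.reflection_apply, LinearMap.transvection.apply, sub_eq_add_neg]
  rw [this, LinearMap.transvection.det, LinearMap.neg_apply, h]
  norm_num

theorem Projectivization.map_eq_self_of_apply_rep_eq_smul {K V : Type*} [DivisionRing K]
    [AddCommGroup V] [Module K V] (f : V →ₗ[K] V) (hf : Function.Injective f)
    (p : Projectivization K V) (a : K) (h : f p.rep = a • p.rep) :
    Projectivization.map f hf p = p := by
  conv_lhs => rw [← p.mk_rep]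
  rw [Projectivization.map_mk]
  conv_rhs => rw [← p.mk_rep]
  exact (Projectivization.mk_eq_mk_iff' K _ _ _ _).2 ⟨a, h.symm⟩

section

variable {n : ℕ}

open Matrix.GeneralLinearGroup LinearMap.GeneralLinearGroup

theorem eps_toLin_symm_ofLinearEquiv (e : (Fin n → ℝ) ≃ₗ[ℝ] (Fin n → ℝ)) :
    eps (toLin.symm (ofLinearEquiv e)) = Real.sign (LinearMap.det e.toLinearMap) := by
  rw [eps, ← LinearMap.det_toMatrix']
  rfl

theorem glAct_toLin_symm_ofLinearEquiv (e : (Fin n → ℝ) ≃ₗ[ℝ] (Fin n → ℝ))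
    (p : Projectivization ℝ (Fin n → ℝ)) :
    glAct (toLin.symm (ofLinearEquiv e)) p = Projectivization.map e.toLinearMap e.injective p := by
  unfold glAct
  congr 1
  exact Matrix.toLin'_toMatrix' _

theorem PEquivariant.eq_zero_of_forall_glAct_eq_self {q : ℕ}
    {f : (Fin q → Projectivization ℝ (Fin n → ℝ)) → ℝ} (hf : PEquivariant f)
    {g : GL (Fin n) ℝ} (hg : eps g = -1) {x : Fin q → Projectivization ℝ (Fin n → ℝ)}
    (hx : ∀ i, glAct g (x i) = x i) : f x = 0 := by
  have := hf g x
  rw [funext hx, hg] at this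
  linarith

theorem PEquivariant.eq_zero_of_forall_ne_le {q : ℕ}
    {f : (Fin q → Projectivization ℝ (Fin n → ℝ)) → ℝ} (hf : PEquivariant f)
    {x : Fin q → Projectivization ℝ (Fin n → ℝ)} {U : Submodule ℝ (Fin n → ℝ)}
    (hU : U ≠ ⊤) (j : Fin q) (hxU : ∀ i ≠ j, (x i).submodule ≤ U) : f x = 0 := by
  obtain ⟨φ, v, hφv, hfixU, hxj⟩ :=
    U.exists_reflection_fixing_and_apply_eq_or_eq_neg hU (x j).rep
  refine hf.eq_zero_of_forall_glAct_eq_self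
    (g := toLin.symm (ofLinearEquiv (Module.reflection hφv))) ?_ fun i => ?_
  · rw [eps_toLin_symm_ofLinearEquiv, Module.det_reflection, Real.sign_neg, Real.sign_one]
  rw [glAct_toLin_symm_ofLinearEquiv]
  by_cases hij : i = j
  · subst hij
    rcases hxj with h | h
    · exact Projectivization.map_eq_self_of_apply_rep_eq_smul _ _ _ 1 (by simpa using h)
    · exact Projectivization.map_eq_self_of_apply_rep_eq_smul _ _ _ (-1) (by simpa using h)
  · refine Projectivization.map_eq_self_of_apply_rep_eq_smul _ _ _ 1 ?_
    rw [one_smul]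
    exact hfixU _ (hxU i hij ((x i).submodule_eq ▸ Submodule.mem_span_singleton_self _))

theorem exists_ne_top_forall_ne_le_of_not_herSpanP
    {x : Fin (n + 1) → Projectivization ℝ (Fin n → ℝ)} (hx : ¬ HerSpanP x) :
    ∃ U : Submodule ℝ (Fin n → ℝ), U ≠ ⊤ ∧
      ∃ j, ∀ i ≠ j, (x i).submodule ≤ U := by
  simp only [HerSpanP, not_forall] at hx
  obtain ⟨s, hs, hU⟩ := hx
  obtain ⟨j, hj⟩ := Finset.card_eq_one.mp (by simp [Finset.card_compl, hs] : sᶜ.card = 1)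
  refine ⟨_, hU, j, fun i hij => le_iSup₂_of_le i ?_ le_rfl⟩
  simpa using (show i ∉ sᶜ by simpa [hj] using hij)

end

theorem stmt2_general (n : ℕ)
    (f : (Fin (n + 1) → Projectivization ℝ (Fin n → ℝ)) → ℝ) (hf : PEquivariant f)
    (x : Fin (n + 1) → Projectivization ℝ (Fin n → ℝ)) (hx : ¬ HerSpanP x) :
    f x = 0 := by
  obtain ⟨U, hU, j, hxU⟩ := exists_ne_top_forall_ne_le_of_not_herSpanP hx
  exact hf.eq_zero_of_forall_ne_le hU j hxU

/-- every `GL_n(ℝ)`-equivariant map `(ℙ(ℝⁿ))^{n+1} → ℝ_ε` vanishes on every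
`(n+1)`-tuple that is not hereditarily spanning. -/
theorem stmt2 (n : ℕ) (hn : 0 < n) (he : Even n)
    (f : (Fin (n + 1) → Projectivization ℝ (Fin n → ℝ)) → ℝ) (hf : PEquivariant f)
    (x : Fin (n + 1) → Projectivization ℝ (Fin n → ℝ)) (hx : ¬ HerSpanP x) :
    f x = 0 :=
  stmt2_general n f hf x hx

end
end

section
/- Let n be a positive even integer, let e_1,…,e_n be the standard basis of ℝⁿ and e_0 = e_1 + ⋯ + e_n. For x ∈ ℝⁿ: (i) the (n+1)-tuple (x, e_1, …, e_n) is hereditarily spanning if and only if all coordinates of x are non-zero; (ii) the (n+2)-tuple (e_0, e_1, …, e_n, x) is hereditarily spanning if and only if all coordinates of x are non-zero and pairwise distinct. -/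
noncomputable section


lemma span_top_of {n : ℕ} {S : Set (Fin n → ℝ)}
    (h : ∀ i, (Pi.single i 1 : Fin n → ℝ) ∈ Submodule.span ℝ S) : Submodule.span ℝ S = ⊤ := by
  rw [eq_top_iff]
  intro y _
  have hy : y = ∑ j, y j • (Pi.single j 1 : Fin n → ℝ) := by
    conv_lhs => rw [← Finset.univ_sum_single y]
    refine Finset.sum_congr rfl fun j _ => ?_
    rw [← Pi.single_smul, smul_eq_mul, mul_one]
  rw [hy]
  exact Submodule.sum_mem _ fun j _ => Submodule.smul_mem _ _ (h j)

lemma not_span_top {n : ℕ} {S : Set (Fin n → ℝ)} (f : (Fin n → ℝ) →ₗ[ℝ] ℝ)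
    (v0 : Fin n → ℝ) (hv0 : f v0 ≠ 0) (h : ∀ v ∈ S, f v = 0) :
    Submodule.span ℝ S ≠ ⊤ := by
  intro htop
  have hle : Submodule.span ℝ S ≤ LinearMap.ker f := Submodule.span_le.mpr fun v hv => h v hv
  exact hv0 (hle (htop ▸ Submodule.mem_top))

lemma memA {n : ℕ} {S : Set (Fin n → ℝ)} {x : Fin n → ℝ} {i : Fin n}
    (hx : x ∈ S) (hs : ∀ j, j ≠ i → (Pi.single j 1 : Fin n → ℝ) ∈ S) (hxi : x i ≠ 0) :
    Submodule.span ℝ S = ⊤ := by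
  apply span_top_of
  intro k
  rcases eq_or_ne k i with rfl | hk
  · have hmem : (Pi.single k (x k) : Fin n → ℝ) ∈ Submodule.span ℝ S := by
      have key : (Pi.single k (x k) : Fin n → ℝ)
          = x - ∑ j ∈ Finset.univ.erase k, Pi.single j (x j) := by
        rw [eq_sub_iff_add_eq, add_comm, Finset.sum_erase_add _ _ (Finset.mem_univ k),
          Finset.univ_sum_single]
      rw [key]
      refine Submodule.sub_mem _ (Submodule.subset_span hx) (Submodule.sum_mem _ fun j hj => ?_)
      have h2 : (Pi.single j (x j) : Fin n → ℝ) = x j • (Pi.single j 1 : Fin n → ℝ) := by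
        rw [← Pi.single_smul, smul_eq_mul, mul_one]
      rw [h2]
      exact Submodule.smul_mem _ _ (Submodule.subset_span (hs j (Finset.ne_of_mem_erase hj)))
    have := Submodule.smul_mem _ (x k)⁻¹ hmem
    rwa [← Pi.single_smul, smul_eq_mul, inv_mul_cancel₀ hxi] at this
  · exact Submodule.subset_span (hs k hk)

lemma memB {n : ℕ} {S : Set (Fin n → ℝ)} {i : Fin n}
    (h1 : (fun _ => (1:ℝ)) ∈ S) (hs : ∀ j, j ≠ i → (Pi.single j 1 : Fin n → ℝ) ∈ S) :
    Submodule.span ℝ S = ⊤ :=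
  memA (x := fun _ => (1:ℝ)) h1 hs one_ne_zero

lemma memC {n : ℕ} {S : Set (Fin n → ℝ)} {x : Fin n → ℝ} {i j : Fin n} (hij : i ≠ j)
    (h1 : (fun _ => (1:ℝ)) ∈ S) (hx : x ∈ S)
    (hs : ∀ k, k ≠ i → k ≠ j → (Pi.single k 1 : Fin n → ℝ) ∈ S) (hd : x i ≠ x j) :
    Submodule.span ℝ S = ⊤ := by
  have hpair : ∀ (f : Fin n → ℝ),
      f - ∑ k ∈ Finset.univ \ {i, j}, (Pi.single k (f k) : Fin n → ℝ)
        = Pi.single i (f i) + Pi.single j (f j) := by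
    intro f
    have h2 := Finset.sum_sdiff (f := fun k => (Pi.single k (f k) : Fin n → ℝ))
        (Finset.subset_univ ({i, j} : Finset (Fin n)))
    rw [Finset.sum_pair hij, Finset.univ_sum_single] at h2
    rw [eq_sub_of_add_eq h2, sub_sub_cancel]
  have hsummem : ∀ (f : Fin n → ℝ),
      (∑ k ∈ Finset.univ \ {i, j}, (Pi.single k (f k) : Fin n → ℝ)) ∈ Submodule.span ℝ S := by
    intro f
    refine Submodule.sum_mem _ fun k hk => ?_
    rw [Finset.mem_sdiff, Finset.mem_insert, Finset.mem_singleton] at hk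
    push_neg at hk
    have h2 : (Pi.single k (f k) : Fin n → ℝ) = f k • (Pi.single k 1 : Fin n → ℝ) := by
      rw [← Pi.single_smul, smul_eq_mul, mul_one]
    rw [h2]
    exact Submodule.smul_mem _ _ (Submodule.subset_span (hs k hk.2.1 hk.2.2))
  have hu : (Pi.single i 1 + Pi.single j 1 : Fin n → ℝ) ∈ Submodule.span ℝ S := by
    have := Submodule.sub_mem _ (Submodule.subset_span h1) (hsummem (fun _ => 1))
    rwa [hpair (fun _ => 1)] at this
  have hw : (Pi.single i (x i) + Pi.single j (x j) : Fin n → ℝ) ∈ Submodule.span ℝ S := by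
    have := Submodule.sub_mem _ (Submodule.subset_span hx) (hsummem x)
    rwa [hpair x] at this
  have ht : (Pi.single i (x i - x j) : Fin n → ℝ) ∈ Submodule.span ℝ S := by
    have h2 := Submodule.sub_mem _ hw (Submodule.smul_mem _ (x j) hu)
    have hid : (Pi.single i (x i) + Pi.single j (x j))
        - x j • ((Pi.single i 1 : Fin n → ℝ) + Pi.single j 1) = Pi.single i (x i - x j) := by
      simp only [smul_add, ← Pi.single_smul, smul_eq_mul, mul_one, Pi.single_sub]
      abel
    rwa [hid] at h2
  have hei : (Pi.single i 1 : Fin n → ℝ) ∈ Submodule.span ℝ S := by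
    have := Submodule.smul_mem _ (x i - x j)⁻¹ ht
    rwa [← Pi.single_smul, smul_eq_mul, inv_mul_cancel₀ (sub_ne_zero.mpr hd)] at this
  have hej : (Pi.single j 1 : Fin n → ℝ) ∈ Submodule.span ℝ S := by
    have := Submodule.sub_mem _ hu hei
    rwa [add_sub_cancel_left] at this
  apply span_top_of
  intro k
  rcases eq_or_ne k i with rfl | hki
  · exact hei
  rcases eq_or_ne k j with rfl | hkj
  · exact hej
  exact Submodule.subset_span (hs k hki hkj)

section basics
variable {n : ℕ}

lemma fin3 (k : Fin (n+2)) :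
    k = 0 ∨ k = Fin.last (n+1) ∨ ∃ i : Fin n, k = Fin.castSucc (Fin.succ i) := by
  induction k using Fin.lastCases with
  | last => exact Or.inr (Or.inl rfl)
  | cast m =>
    induction m using Fin.cases with
    | zero => left; rfl
    | succ i => exact Or.inr (Or.inr ⟨i, rfl⟩)

lemma h0last : (0 : Fin (n+2)) ≠ Fin.last (n+1) := by
  simp [Fin.ext_iff]

lemma h0mid (i : Fin n) : (0 : Fin (n+2)) ≠ Fin.castSucc (Fin.succ i) := by
  simp [Fin.ext_iff]

lemma hlastmid (i : Fin n) : Fin.last (n+1) ≠ Fin.castSucc (Fin.succ i) := by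
  intro h
  have h2 := congrArg Fin.val h
  have h3 := i.isLt
  simp only [Fin.val_last, Fin.coe_castSucc, Fin.val_succ] at h2
  omega

lemma midinj {i j : Fin n} (h : Fin.castSucc (Fin.succ i) = Fin.castSucc (Fin.succ j)) :
    i = j := by
  have := Fin.castSucc_injective _ h
  exact Fin.succ_injective _ this

variable (x : Fin n → ℝ)

local notation "V" => (Fin.snoc
    (Fin.cons (fun _ => 1) (fun i : Fin n => Pi.single i 1) : Fin (n + 1) → (Fin n → ℝ)) x :
      Fin (n + 2) → (Fin n → ℝ))

lemma V_zero : V 0 = fun _ => (1:ℝ) := by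
  rw [show (0 : Fin (n+2)) = Fin.castSucc 0 from rfl, Fin.snoc_castSucc, Fin.cons_zero]

lemma V_last : V (Fin.last (n+1)) = x := Fin.snoc_last _ _

lemma V_mid (i : Fin n) : V (Fin.castSucc (Fin.succ i)) = Pi.single i 1 := by
  rw [Fin.snoc_castSucc, Fin.cons_succ]

end basics

/-- A `k`-tuple of vectors of `ℝⁿ` is hereditarily spanning if every subcollection of `n`
of its entries spans `ℝⁿ`. -/
def HerSpan {n k : ℕ} (v : Fin k → (Fin n → ℝ)) : Prop :=
  ∀ s : Finset (Fin k), s.card = n → Submodule.span ℝ (v '' ↑s) = ⊤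

/-- with `e_1, …, e_n` the standard basis of `ℝⁿ` and `e_0 = e_1 + ⋯ + e_n`
(the all-ones vector): (i) `(x, e_1, …, e_n)` is hereditarily spanning iff all coordinates
of `x` are nonzero; (ii) `(e_0, e_1, …, e_n, x)` is hereditarily spanning iff all
coordinates of `x` are nonzero and pairwise distinct. -/
theorem stmt4 (n : ℕ) (hn : 0 < n) (he : Even n) (x : Fin n → ℝ) :
    (HerSpan (Fin.cons x (fun i : Fin n => Pi.single i 1) : Fin (n + 1) → (Fin n → ℝ)) ↔
      ∀ i, x i ≠ 0) ∧
    (HerSpan (Fin.snoc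
        (Fin.cons (fun _ => 1) (fun i : Fin n => Pi.single i 1) : Fin (n + 1) → (Fin n → ℝ)) x :
          Fin (n + 2) → (Fin n → ℝ)) ↔
      ((∀ i, x i ≠ 0) ∧ ∀ i j, i ≠ j → x i ≠ x j)) := by
  constructor
  · -- part (i)
    constructor
    · intro h i
      have hcard : ({Fin.succ i}ᶜ : Finset (Fin (n+1))).card = n := by
        rw [Finset.card_compl]; simp
      have hsp := h _ hcard
      by_contra hxi
      refine absurd hsp (not_span_top (LinearMap.proj i) (Pi.single i 1) (by simp) ?_)
      rintro w ⟨k, hk, rfl⟩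
      simp only [Finset.coe_compl, Set.mem_compl_iff, Finset.coe_singleton,
        Set.mem_singleton_iff] at hk
      induction k using Fin.cases with
      | zero => simpa using hxi
      | succ j =>
        have hji : j ≠ i := fun hji => hk (by rw [hji])
        simp [Pi.single_eq_of_ne hji.symm]
    · intro hx s hcard
      have hc : sᶜ.card = 1 := by
        rw [Finset.card_compl, hcard]; simp
      obtain ⟨m, hm⟩ := Finset.card_eq_one.mp hc
      have hmem : ∀ k, k ∈ s ↔ k ≠ m := by
        intro k
        constructor
        · intro hks hkm
          subst hkm
          have hmc : k ∈ sᶜ := by rw [hm]; exact Finset.mem_singleton_self k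
          exact Finset.mem_compl.mp hmc hks
        · intro hkm
          by_contra hks
          have hmc : k ∈ sᶜ := Finset.mem_compl.mpr hks
          rw [hm, Finset.mem_singleton] at hmc
          exact hkm hmc
      induction m using Fin.cases with
      | zero =>
        apply span_top_of
        intro k
        exact Submodule.subset_span
          ⟨k.succ, by simpa using (hmem k.succ).mpr (Fin.succ_ne_zero k), by simp⟩
      | succ i =>
        refine memA (x := x) (i := i)
          ⟨0, by simpa using (hmem 0).mpr (Fin.succ_ne_zero i).symm, by simp⟩
          (fun j hj => ⟨j.succ, by simpa using (hmem j.succ).mpr (by simpa using hj), by simp⟩)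
          (hx i)
  · -- part (ii)
    constructor
    · intro h
      constructor
      · intro i
        have hcard : (({0, Fin.castSucc (Fin.succ i)} : Finset (Fin (n+2)))ᶜ).card = n := by
          rw [Finset.card_compl, Finset.card_pair (h0mid i)]
          simp
        have hsp := h _ hcard
        by_contra hxi
        refine absurd hsp (not_span_top (LinearMap.proj i) (Pi.single i 1) (by simp) ?_)
        rintro w ⟨k, hk, rfl⟩
        simp only [Finset.coe_compl, Set.mem_compl_iff, Finset.coe_insert, Finset.coe_singleton,
          Set.mem_insert_iff, Set.mem_singleton_iff, not_or] at hk
        rcases fin3 k with rfl | rfl | ⟨l, rfl⟩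
        · exact absurd rfl hk.1
        · rw [V_last]; simpa using hxi
        · have hl : l ≠ i := fun h' => hk.2 (by rw [h'])
          rw [V_mid]
          simp [Pi.single_eq_of_ne hl.symm]
      · intro i j hij
        have hcard : (({Fin.castSucc (Fin.succ i), Fin.castSucc (Fin.succ j)} :
            Finset (Fin (n+2)))ᶜ).card = n := by
          rw [Finset.card_compl, Finset.card_pair (fun h' => hij (midinj h'))]
          simp
        have hsp := h _ hcard
        by_contra hxd
        refine absurd hsp (not_span_top ((LinearMap.proj i : (Fin n → ℝ) →ₗ[ℝ] ℝ) - LinearMap.proj j)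
          (Pi.single i 1) ?_ ?_)
        · simp [Pi.single_eq_of_ne hij.symm]
        rintro w ⟨k, hk, rfl⟩
        simp only [Finset.coe_compl, Set.mem_compl_iff, Finset.coe_insert, Finset.coe_singleton,
          Set.mem_insert_iff, Set.mem_singleton_iff, not_or] at hk
        rcases fin3 k with rfl | rfl | ⟨l, rfl⟩
        · rw [V_zero]; simp
        · rw [V_last]; simp [hxd]
        · have hli : l ≠ i := fun h' => hk.1 (by rw [h'])
          have hlj : l ≠ j := fun h' => hk.2 (by rw [h'])
          rw [V_mid]
          simp [Pi.single_eq_of_ne hli.symm, Pi.single_eq_of_ne hlj.symm]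
    · rintro ⟨hx0, hxd⟩ s hcard
      have hc : sᶜ.card = 2 := by rw [Finset.card_compl, hcard]; simp; omega
      obtain ⟨a, b, hab, hpair⟩ := Finset.card_eq_two.mp hc
      have hmem : ∀ k, k ∈ s ↔ k ≠ a ∧ k ≠ b := by
        intro k
        constructor
        · intro hks
          constructor <;> rintro rfl <;>
            exact Finset.mem_compl.mp (by rw [hpair]; simp) hks
        · rintro ⟨ha, hb⟩
          by_contra hks
          have hmc : k ∈ sᶜ := Finset.mem_compl.mpr hks
          rw [hpair, Finset.mem_insert, Finset.mem_singleton] at hmc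
          exact hmc.elim ha hb
      set V : Fin (n+2) → (Fin n → ℝ) := (Fin.snoc
          (Fin.cons (fun _ => 1) (fun i : Fin n => Pi.single i 1) : Fin (n + 1) → (Fin n → ℝ)) x)
        with hV
      have himg0 : 0 ∈ s → (fun _ => (1:ℝ)) ∈ V '' ↑s :=
        fun h' => ⟨0, Finset.mem_coe.mpr h', V_zero x⟩
      have himgl : Fin.last (n+1) ∈ s → x ∈ V '' ↑s :=
        fun h' => ⟨_, Finset.mem_coe.mpr h', V_last x⟩
      have himgm : ∀ l : Fin n, Fin.castSucc (Fin.succ l) ∈ s →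
          (Pi.single l 1 : Fin n → ℝ) ∈ V '' ↑s :=
        fun l h' => ⟨_, Finset.mem_coe.mpr h', V_mid x l⟩
      rcases fin3 a with rfl | rfl | ⟨i, rfl⟩ <;> rcases fin3 b with rfl | rfl | ⟨j, rfl⟩
      · exact absurd rfl hab
      · apply span_top_of
        intro k
        exact Submodule.subset_span (himgm k ((hmem _).mpr ⟨(h0mid k).symm, (hlastmid k).symm⟩))
      · exact memA (himgl ((hmem _).mpr ⟨h0last.symm, hlastmid j⟩))
          (fun l hl => himgm l ((hmem _).mpr ⟨(h0mid l).symm, fun h' => hl (midinj h')⟩)) (hx0 j)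
      · apply span_top_of
        intro k
        exact Submodule.subset_span (himgm k ((hmem _).mpr ⟨(hlastmid k).symm, (h0mid k).symm⟩))
      · exact absurd rfl hab
      · exact memB (himg0 ((hmem _).mpr ⟨h0last, h0mid j⟩))
          (fun l hl => himgm l ((hmem _).mpr ⟨(hlastmid l).symm, fun h' => hl (midinj h')⟩))
      · exact memA (himgl ((hmem _).mpr ⟨hlastmid i, h0last.symm⟩))
          (fun l hl => himgm l ((hmem _).mpr ⟨fun h' => hl (midinj h'), (h0mid l).symm⟩)) (hx0 i)
      · exact memB (himg0 ((hmem _).mpr ⟨h0mid i, h0last⟩))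
          (fun l hl => himgm l ((hmem _).mpr ⟨fun h' => hl (midinj h'), (hlastmid l).symm⟩))
      · have hij : i ≠ j := fun h' => hab (by rw [h'])
        exact memC hij (himg0 ((hmem _).mpr ⟨h0mid i, h0mid j⟩))
          (himgl ((hmem _).mpr ⟨hlastmid i, hlastmid j⟩))
          (fun l h1 h2 => himgm l
            ((hmem _).mpr ⟨fun h' => h1 (midinj h'), fun h' => h2 (midinj h')⟩))
          (hxd i j hij)

end
end

section
/- Let n be a positive even integer. The map pcoc : (ℝⁿ)^{n+1} → {−1,0,1} satisfies: (i) pcoc(v_0,…,λv_j,…,v_n) = pcoc(v_0,…,v_n) for every j and every nonzero scalar λ (so pcoc descends to a map on (ℙ(ℝⁿ))^{n+1}); (ii) pcoc is alternating, i.e. pcoc(v_{σ(0)},…,v_{σ(n)}) = sign(σ)·pcoc(v_0,…,v_n) for every permutation σ of {0,…,n}; (iii) pcoc(g v_0,…,g v_n) = ε(g)·pcoc(v_0,…,v_n) for every g ∈ GL_n(ℝ), where ε(g) is the sign of det g. -/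
open Matrix

noncomputable section

/-- Sign of the determinant of the matrix whose columns are `v 0, …, v (n-1)`
(zero if they do not form a basis). -/
def oriV {n : ℕ} (v : Fin n → (Fin n → ℝ)) : ℝ :=
  Real.sign (Matrix.det (Matrix.of fun i j => v j i))

/-- `pcoc(v_0,…,v_n) = ∏_{i=0}^{n} ori(v_0,…,v̂_i,…,v_n)`. -/
def pcoc {n : ℕ} (v : Fin (n + 1) → (Fin n → ℝ)) : ℝ :=
  ∏ i : Fin (n + 1), oriV (v ∘ i.succAbove)

/-!
Every factor of `pcoc` is the sign of a determinant. Scaling `v_j` by `λ` multiplies the `n`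
factors containing `v_j` by `sign λ`, and `g` multiplies all `n + 1` factors by `sign (det g)`;
as `n` is even, these contribute `1` and `sign (det g)`. For a permutation `σ`, the factor
omitting `i` becomes the factor omitting `σ i` with its columns reordered by the bijection
`τᵢ` that `σ` induces between the complements of `i` and `σ i`. Moving `i` and `σ i` to `0` by
cycles gives `sign τᵢ = (-1)^(σ i) · sign σ · (-1)^i`, so `∏ᵢ sign τᵢ = (sign σ)^(n+1) = sign σ`.
-/

namespace Real

theorem sign_eq_coe_sign_s5 (r : ℝ) : Real.sign r = (SignType.sign r : ℝ) := by
  rcases lt_trichotomy r 0 with h | rfl | h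
  · simp [sign_of_neg h, h]
  · simp [sign_zero]
  · simp [sign_of_pos h, h]

theorem sign_mul (a b : ℝ) : Real.sign (a * b) = Real.sign a * Real.sign b := by
  simp only [sign_eq_coe_sign_s5, _root_.sign_mul, SignType.coe_mul]

theorem sign_intCast_units (u : ℤˣ) : Real.sign ((u : ℤ) : ℝ) = u := by
  rcases Int.units_eq_one_or u with rfl | rfl <;> simp [sign_one, sign_neg]

theorem sign_pow_of_odd (r : ℝ) {m : ℕ} (hm : Odd m) : Real.sign r ^ m = Real.sign r := by
  rcases sign_apply_eq r with h | h | h <;> simp [h, hm.neg_one_pow, hm.pos.ne']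

theorem sign_pow_of_even {r : ℝ} (hr : r ≠ 0) {m : ℕ} (hm : Even m) : Real.sign r ^ m = 1 := by
  rcases sign_apply_eq_of_ne_zero r hr with h | h <;> simp [h, hm.neg_one_pow]

end Real

namespace Equiv.Perm

variable {n : ℕ}

theorem decomposeFin_symm_zero_snd {π : Perm (Fin (n + 1))} (hπ : π 0 = 0) :
    decomposeFin.symm (0, (decomposeFin π).2) = π := by
  obtain ⟨⟨p, e⟩, rfl⟩ := decomposeFin.symm.surjective π
  rw [decomposeFin_symm_apply_zero] at hπ
  simp [hπ]

/-- The bijection `Fin n → Fin n` that `σ` induces, through `Fin.succAbove`, from the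
complement of `i` to the complement of `σ i`. -/
def restrictCompl (σ : Perm (Fin (n + 1))) (i : Fin (n + 1)) : Perm (Fin n) :=
  (decomposeFin ((σ i).cycleRange * σ * i.cycleRange⁻¹)).2

theorem cycleRange_conj_apply_zero (σ : Perm (Fin (n + 1))) (i : Fin (n + 1)) :
    ((σ i).cycleRange * σ * i.cycleRange⁻¹) 0 = 0 := by
  simp [mul_apply, Fin.cycleRange_symm_zero, Fin.cycleRange_self]

theorem succAbove_restrictCompl (σ : Perm (Fin (n + 1))) (i : Fin (n + 1)) (j : Fin n) :
    (σ i).succAbove (σ.restrictCompl i j) = σ (i.succAbove j) := by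
  have h := DFunLike.congr_fun (decomposeFin_symm_zero_snd (cycleRange_conj_apply_zero σ i)) j.succ
  simp only [decomposeFin_symm_apply_succ, swap_self, refl_apply] at h
  rw [← Fin.cycleRange_symm_succ, restrictCompl, h]
  simp only [mul_apply, coe_inv, Fin.cycleRange_symm_succ, symm_apply_apply]

theorem sign_restrictCompl (σ : Perm (Fin (n + 1))) (i : Fin (n + 1)) :
    sign (σ.restrictCompl i) = (-1) ^ (σ i : ℕ) * sign σ * (-1) ^ (i : ℕ) :=
  calc sign (σ.restrictCompl i) = sign (decomposeFin.symm (0, σ.restrictCompl i)) := by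
        rw [decomposeFin.symm_sign, if_pos rfl, one_mul]
    _ = sign ((σ i).cycleRange * σ * i.cycleRange⁻¹) := by
        rw [restrictCompl, decomposeFin_symm_zero_snd (cycleRange_conj_apply_zero σ i)]
    _ = (-1) ^ (σ i : ℕ) * sign σ * (-1) ^ (i : ℕ) := by
        simp [Fin.sign_cycleRange]

theorem prod_sign_restrictCompl (σ : Perm (Fin (n + 1))) :
    ∏ i, sign (σ.restrictCompl i) = sign σ ^ (n + 1) := by
  simp only [sign_restrictCompl, Finset.prod_mul_distrib, Finset.prod_const, Finset.card_univ,
    Fintype.card_fin, Equiv.prod_comp σ fun i => (-1 : ℤˣ) ^ (i : ℕ)]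
  rw [mul_comm, ← mul_assoc, Int.units_mul_self, one_mul]

end Equiv.Perm

section

open Equiv

variable {n : ℕ}

theorem oriV_eq_sign_det (v : Fin n → Fin n → ℝ) : oriV v = Real.sign (of v).det := by
  rw [oriV, ← det_transpose]
  rfl

theorem oriV_update_smul (v : Fin n → Fin n → ℝ) (k : Fin n) (c : ℝ) :
    oriV (Function.update v k (c • v k)) = Real.sign c * oriV v := by
  rw [oriV_eq_sign_det, oriV_eq_sign_det, ← Real.sign_mul]
  congr 1
  exact (det_updateRow_smul (of v) k c (of v k)).trans (by rw [updateRow_eq_self])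

theorem oriV_comp_perm (v : Fin n → Fin n → ℝ) (τ : Perm (Fin n)) :
    oriV (v ∘ τ) = Perm.sign τ * oriV v := by
  rw [oriV_eq_sign_det, oriV_eq_sign_det, ← Real.sign_intCast_units, ← Real.sign_mul,
    ← det_permute]
  rfl

theorem oriV_mulVec (g : Matrix (Fin n) (Fin n) ℝ) (v : Fin n → Fin n → ℝ) :
    oriV (fun i => g *ᵥ v i) = Real.sign g.det * oriV v := by
  have h : of (fun i => g *ᵥ v i) = of v * gᵀ := by
    ext i j
    simp [mulVec, dotProduct, mul_apply, mul_comm]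
  rw [oriV_eq_sign_det, oriV_eq_sign_det, h, det_mul, det_transpose, Real.sign_mul, mul_comm]

theorem oriV_update_smul_comp_succAbove (v : Fin (n + 1) → Fin n → ℝ) {i j : Fin (n + 1)}
    (hij : j ≠ i) (c : ℝ) :
    oriV (Function.update v j (c • v j) ∘ i.succAbove) = Real.sign c * oriV (v ∘ i.succAbove) := by
  obtain ⟨l, rfl⟩ := Fin.exists_succAbove_eq hij
  rw [Function.update_comp_eq_of_injective _ Fin.succAbove_right_injective]
  exact oriV_update_smul _ l c

theorem pcoc_update_smul (v : Fin (n + 1) → Fin n → ℝ) (j : Fin (n + 1)) (c : ℝ) :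
    pcoc (Function.update v j (c • v j)) = Real.sign c ^ n * pcoc v := by
  have hj : Function.update v j (c • v j) ∘ j.succAbove = v ∘ j.succAbove :=
    Function.update_comp_eq_of_notMem_range _ _ (by simp)
  simp only [pcoc, Fin.prod_univ_succAbove _ j, hj,
    oriV_update_smul_comp_succAbove v (Fin.succAbove_ne j _).symm, Finset.prod_mul_distrib,
    Finset.prod_const, Finset.card_univ, Fintype.card_fin]
  ring

theorem pcoc_comp_perm (v : Fin (n + 1) → Fin n → ℝ) (σ : Perm (Fin (n + 1))) :
    pcoc (v ∘ σ) = ((Perm.sign σ ^ (n + 1) : ℤˣ) : ℤ) * pcoc v := by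
  have h : ∀ i, oriV ((v ∘ σ) ∘ i.succAbove)
      = Perm.sign (σ.restrictCompl i) * oriV (v ∘ (σ i).succAbove) := by
    intro i
    rw [← oriV_comp_perm]
    congr 1
    funext j
    simp [Perm.succAbove_restrictCompl]
  rw [pcoc, Finset.prod_congr rfl fun i _ => h i, Finset.prod_mul_distrib,
    Equiv.prod_comp σ fun i => oriV (v ∘ i.succAbove), ← Perm.prod_sign_restrictCompl]
  push_cast
  rfl

theorem pcoc_mulVec (g : Matrix (Fin n) (Fin n) ℝ) (v : Fin (n + 1) → Fin n → ℝ) :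
    pcoc (fun i => g *ᵥ v i) = Real.sign g.det ^ (n + 1) * pcoc v := by
  have h : ∀ i : Fin (n + 1), oriV ((fun k => g *ᵥ v k) ∘ i.succAbove)
      = Real.sign g.det * oriV (v ∘ i.succAbove) := fun i => oriV_mulVec g (v ∘ i.succAbove)
  rw [pcoc, Finset.prod_congr rfl fun i _ => h i, Finset.prod_mul_distrib, Finset.prod_const,
    Finset.card_univ, Fintype.card_fin, pcoc]

end

theorem stmt5_general (n : ℕ) (he : Even n) :
    (∀ (v : Fin (n + 1) → (Fin n → ℝ)) (j : Fin (n + 1)) (lam : ℝ), lam ≠ 0 →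
      pcoc (Function.update v j (lam • v j)) = pcoc v) ∧
    (∀ (v : Fin (n + 1) → (Fin n → ℝ)) (σ : Equiv.Perm (Fin (n + 1))),
      pcoc (v ∘ σ) = ((Equiv.Perm.sign σ : ℤ) : ℝ) * pcoc v) ∧
    (∀ (v : Fin (n + 1) → (Fin n → ℝ)) (g : GL (Fin n) ℝ),
      pcoc (fun i => (g : Matrix (Fin n) (Fin n) ℝ) *ᵥ v i) = eps g * pcoc v) := by
  have hodd : Odd (n + 1) := he.add_one
  refine ⟨fun v j lam hlam => ?_, fun v σ => ?_, fun v g => ?_⟩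
  · rw [pcoc_update_smul, Real.sign_pow_of_even hlam he, one_mul]
  · rw [pcoc_comp_perm, Int.units_pow_eq_pow_mod_two, Nat.odd_iff.mp hodd, pow_one]
  · rw [pcoc_mulVec, Real.sign_pow_of_odd _ hodd, eps]

/-- (i) `pcoc` is invariant under scaling any single entry by a nonzero
scalar (hence descends to projective space); (ii) `pcoc` is alternating;
(iii) `pcoc` is `GL_n(ℝ)`-equivariant with values in the sign module `ℝ_ε`. -/
theorem stmt5 (n : ℕ) (hn : 0 < n) (he : Even n) :
    (∀ (v : Fin (n + 1) → (Fin n → ℝ)) (j : Fin (n + 1)) (lam : ℝ), lam ≠ 0 →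
      pcoc (Function.update v j (lam • v j)) = pcoc v) ∧
    (∀ (v : Fin (n + 1) → (Fin n → ℝ)) (σ : Equiv.Perm (Fin (n + 1))),
      pcoc (v ∘ σ) = ((Equiv.Perm.sign σ : ℤ) : ℝ) * pcoc v) ∧
    (∀ (v : Fin (n + 1) → (Fin n → ℝ)) (g : GL (Fin n) ℝ),
      pcoc (fun i => (g : Matrix (Fin n) (Fin n) ℝ) *ᵥ v i) = eps g * pcoc v) :=
  stmt5_general n he

end
end

section
/- Let n be a positive even integer, e_1,…,e_n the standard basis of ℝⁿ, e_0 = e_1+⋯+e_n, and let F_0,…,F_n be the complete flags F_0 = F(e_0,e_1,…,e_{n−1}), F_1 = F(e_1,e_2,…,e_n), and F_i = F(e_i,e_{i+1},…,e_n,e_0,e_1,…,e_{i−1}) for 2 ≤ i ≤ n. If b is a map from n-tuples of complete flags in ℝⁿ to ℝ satisfying b(gG_1,…,gG_n) = sign(det g)·b(G_1,…,G_n) for every g ∈ GL_n(ℤ) (i.e. b is PGL_n(ℤ)-equivariant with values in ℝ_ε), then ∑_{i=0}^{n} (−1)^i b(F_0,…,F̂_i,…,F_n) = 0. -/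
/-!
Each term of the coboundary vanishes on its own. Put `ε₀ = -(e₁ + ⋯ + eₙ)` and `ε_b = e_b`, so that
`ε₀ + ⋯ + εₙ = 0` and `F_k` is the flag of `(ε_k, ε_{k+1}, …)` (indices mod `n + 1`). For each `i`,
let `φ` be the integral functional with `φ(ε_b) = [b = i - 1] - [b = i]`. The integral reflection
`x ↦ x - 2 φ(x) ε_{i-1}` has determinant `-1`, and it fixes every `F_k` with `k ≠ i`: it negates
`ε_{i-1}`, fixes `ε_b` for `b ∉ {i - 1, i}`, and changes `ε_i` only by a multiple of `ε_{i-1}`,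
which comes right before `ε_i` in `F_k`. Equivariance then gives `b = -b` on the face that
omits `F_i`.
-/

noncomputable section

/-- The complete flag `F(w_1,…,w_n)` associated with a basis, as the function sending
`i ∈ {0,…,n}` to the span of the first `i` basis vectors. -/
def stdFlag {n : ℕ} (w : Fin n → (Fin n → ℝ)) : Fin (n + 1) → Submodule ℝ (Fin n → ℝ) :=
  fun i => Submodule.span ℝ (w '' {j | (j : ℕ) < (i : ℕ)})

/-- A function `Fin (n+1) → Submodule ℝ (Fin n → ℝ)` is a complete flag if it is an
increasing chain of subspaces with `dim Fⁱ = i`. -/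
def IsCompleteFlag {n : ℕ} (s : Fin (n + 1) → Submodule ℝ (Fin n → ℝ)) : Prop :=
  Monotone s ∧ ∀ i, Module.finrank ℝ (s i) = (i : ℕ)

/-- The action of an integer matrix on complete flags, by taking images of subspaces. -/
def mapFlag {n : ℕ} (g : Matrix (Fin n) (Fin n) ℤ)
    (s : Fin (n + 1) → Submodule ℝ (Fin n → ℝ)) : Fin (n + 1) → Submodule ℝ (Fin n → ℝ) :=
  fun i => Submodule.map (Matrix.mulVecLin (g.map (Int.cast : ℤ → ℝ))) (s i)

/-- The cyclic list `(e_0, e_1, …, e_n)` where `e_1, …, e_n` is the standard basis of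
`ℝⁿ` and `e_0 = e_1 + ⋯ + e_n`. -/
def cyc (n : ℕ) : Fin (n + 1) → (Fin n → ℝ) :=
  fun k => if h : (k : ℕ) = 0 then (fun _ => 1)
    else Pi.single (⟨(k : ℕ) - 1, by have := k.isLt; omega⟩ : Fin n) 1

/-- The basis `(e_i, e_{i+1}, …)` (indices cyclic in `(e_0, …, e_n)`, keeping the first
`n` entries), whose flag is the flag `F_i` of Bucher–Monod's Lemma on vanishing of
coboundaries: `F_0 = F(e_0,e_1,…,e_{n−1})`, `F_1 = F(e_1,…,e_n)`, and
`F_i = F(e_i,…,e_n,e_0,…,e_{i−2})` for `2 ≤ i ≤ n`. -/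
def flagTuple (n : ℕ) (i : Fin (n + 1)) : Fin n → (Fin n → ℝ) :=
  fun j => cyc n (i + Fin.castSucc j)

open Matrix

section Flag

variable {n : ℕ}

theorem Submodule.map_eq_self_of_involutive {R M : Type*} [Semiring R] [AddCommMonoid M]
    [Module R M] {f : M →ₗ[R] M} (hf : Function.Involutive f) {p : Submodule R M}
    (h : p.map f ≤ p) : p.map f = p :=
  le_antisymm h fun x hx => ⟨f x, h ⟨x, hx, rfl⟩, hf x⟩

theorem stdFlag_congr {w w' : Fin n → Fin n → ℝ} (h : ∀ j, ℝ ∙ w j = ℝ ∙ w' j) :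
    stdFlag w = stdFlag w' := by
  have hle : ∀ {w w' : Fin n → Fin n → ℝ}, (∀ j, ℝ ∙ w j = ℝ ∙ w' j) →
      ∀ i, stdFlag w i ≤ stdFlag w' i := by
    intro w w' h i
    refine Submodule.span_le.2 ?_
    rintro _ ⟨j, hj, rfl⟩
    have hw : w j ∈ ℝ ∙ w' j := h j ▸ Submodule.mem_span_singleton_self (w j)
    exact Submodule.span_mono (Set.singleton_subset_iff.2 (Set.mem_image_of_mem w' hj)) hw
  funext i
  exact le_antisymm (hle h i) (hle (fun j => (h j).symm) i)

theorem isCompleteFlag_stdFlag {w : Fin n → Fin n → ℝ} (hw : LinearIndependent ℝ w) :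
    IsCompleteFlag (stdFlag w) := by
  refine ⟨fun a b hab => Submodule.span_mono <|
    Set.image_mono fun j (hj : (j : ℕ) < a) => show (j : ℕ) < b from hj.trans_le hab, fun i => ?_⟩
  have hi : (i : ℕ) ≤ n := Nat.lt_succ_iff.1 i.isLt
  rw [stdFlag, ← Fin.range_castLE hi, ← Set.range_comp,
    finrank_span_eq_card (hw.comp _ (Fin.castLE_injective hi)), Fintype.card_fin]

theorem mapFlag_stdFlag_eq {g : Matrix (Fin n) (Fin n) ℤ} {w : Fin n → Fin n → ℝ}
    (hg : Function.Involutive (g.map (Int.cast : ℤ → ℝ)).mulVecLin)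
    (htri : ∀ j, (g.map (Int.cast : ℤ → ℝ)).mulVecLin (w j) ∈
      Submodule.span ℝ (w '' {j' | j' ≤ j})) :
    mapFlag g (stdFlag w) = stdFlag w := by
  funext i
  apply Submodule.map_eq_self_of_involutive hg
  refine (Submodule.map_span_le _ _ _).2 ?_
  rintro _ ⟨j, hj, rfl⟩
  exact Submodule.span_mono
    (Set.image_mono fun j' (hj' : j' ≤ j) => show (j' : ℕ) < i from lt_of_le_of_lt hj' hj) (htri j)

end Flag

section Reflection

variable {m R : Type*} [DecidableEq m] [CommRing R]

def reflectionMatrix (u v : m → R) : Matrix m m R :=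
  1 - vecMulVec u ((2 : R) • v)

theorem reflectionMatrix_mulVec [Fintype m] (u v x : m → R) :
    reflectionMatrix u v *ᵥ x = x - (2 * (v ⬝ᵥ x)) • u := by
  rw [reflectionMatrix, sub_mulVec, one_mulVec, vecMulVec_mulVec, op_smul_eq_smul,
    smul_dotProduct, smul_eq_mul]

theorem reflectionMatrix_mulVec_mulVec [Fintype m] {u v : m → R} (h : v ⬝ᵥ u = 1) (x : m → R) :
    reflectionMatrix u v *ᵥ (reflectionMatrix u v *ᵥ x) = x := by
  simp only [reflectionMatrix_mulVec, dotProduct_sub, dotProduct_smul, h, smul_eq_mul]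
  module

theorem det_reflectionMatrix [Fintype m] {u v : m → R} (h : v ⬝ᵥ u = 1) :
    (reflectionMatrix u v).det = -1 := by
  rw [reflectionMatrix, sub_eq_add_neg, ← neg_vecMulVec, vecMulVec_eq Unit,
    det_one_add_replicateCol_mul_replicateRow, dotProduct_neg, smul_dotProduct, h]
  norm_num

theorem map_reflectionMatrix {S : Type*} [CommRing S] (f : R →+* S) (u v : m → R) :
    (reflectionMatrix u v).map f = reflectionMatrix (f ∘ u) (f ∘ v) := by
  ext i j
  simp [reflectionMatrix, Matrix.one_apply, vecMulVec_apply, map_ofNat]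

end Reflection

section RootVectors

variable (R : Type*) [CommRing R] (n : ℕ)

def rootVec : Fin (n + 1) → Fin n → R :=
  Fin.cases (-1) fun c => Pi.single c 1

def coordVec : Fin (n + 1) → Fin n → R :=
  Fin.cases 0 fun c => Pi.single c 1

theorem sum_rootVec : ∑ b, rootVec R n b = 0 := by
  rw [Fin.sum_univ_succ]
  simp only [rootVec, Fin.cases_zero, Fin.cases_succ]
  rw [Finset.univ_sum_single (fun _ => (1 : R))]
  exact neg_add_cancel _

variable {R n}

theorem coordVec_dotProduct_rootVec (a b : Fin (n + 1)) :
    coordVec R n a ⬝ᵥ rootVec R n b = (if b = a then 1 else 0) - if b = 0 then 1 else 0 := by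
  induction a using Fin.cases <;> induction b using Fin.cases <;>
    simp [coordVec, rootVec, Pi.single_apply, eq_comm]

theorem map_rootVec {S : Type*} [CommRing S] (f : R →+* S) (b : Fin (n + 1)) :
    f ∘ rootVec R n b = rootVec S n b := by
  induction b using Fin.cases <;> ext <;> simp [rootVec, Pi.single_apply, apply_ite f]

theorem map_coordVec {S : Type*} [CommRing S] (f : R →+* S) (b : Fin (n + 1)) :
    f ∘ coordVec R n b = coordVec S n b := by
  induction b using Fin.cases <;> ext <;> simp [coordVec, Pi.single_apply, apply_ite f]

theorem span_singleton_cyc (b : Fin (n + 1)) : ℝ ∙ cyc n b = ℝ ∙ rootVec ℝ n b := by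
  induction b using Fin.cases with
  | zero => simp [cyc, rootVec, Pi.one_def, ← Set.neg_singleton, Submodule.span_neg]
  | succ c => simp [cyc, rootVec]

end RootVectors

section RootTuple

variable {n : ℕ}

def rootTuple (n : ℕ) (k : Fin (n + 1)) : Fin n → Fin n → ℝ :=
  fun j => rootVec ℝ n (k + Fin.castSucc j)

theorem stdFlag_flagTuple (k : Fin (n + 1)) : stdFlag (flagTuple n k) = stdFlag (rootTuple n k) :=
  stdFlag_congr fun _ => span_singleton_cyc _

theorem exists_add_castSucc_eq {k b : Fin (n + 1)} (hb : b ≠ k - 1) :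
    ∃ j : Fin n, k + Fin.castSucc j = b := by
  have hlast : b - k ≠ Fin.last n := by
    rw [Ne, sub_eq_iff_eq_add', eq_neg_of_add_eq_zero_left (Fin.last_add_one n), ← sub_eq_add_neg]
    exact hb
  obtain ⟨j, hj⟩ := Fin.exists_castSucc_eq.2 hlast
  exact ⟨j, by rw [hj, add_sub_cancel]⟩

theorem linearIndependent_rootTuple (k : Fin (n + 1)) : LinearIndependent ℝ (rootTuple n k) := by
  set V := Submodule.span ℝ (Set.range (rootTuple n k))
  have hmem : ∀ b, b ≠ k - 1 → rootVec ℝ n b ∈ V := fun b hb => by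
    obtain ⟨j, rfl⟩ := exists_add_castSucc_eq hb
    exact Submodule.subset_span ⟨j, rfl⟩
  have hall : ∀ b, rootVec ℝ n b ∈ V := by
    intro b
    by_cases hb : b = k - 1
    · have hsum := Finset.add_sum_erase Finset.univ (rootVec ℝ n) (Finset.mem_univ b)
      rw [sum_rootVec, add_eq_zero_iff_eq_neg] at hsum
      rw [hsum]
      exact neg_mem (Submodule.sum_mem _ fun b' hb' => hmem b' (hb ▸ Finset.ne_of_mem_erase hb'))
    · exact hmem b hb
  refine linearIndependent_of_top_le_span_of_card_eq_finrank ?_ (by simp)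
  rw [← (Pi.basisFun ℝ (Fin n)).span_eq, Submodule.span_le]
  rintro _ ⟨c, rfl⟩
  simpa [rootVec] using hall c.succ

end RootTuple

section FlagReflection

variable {n : ℕ}

theorem coordVec_sub_coordVec_dotProduct_rootVec {R : Type*} [CommRing R] (a a' b : Fin (n + 1)) :
    (coordVec R n a - coordVec R n a') ⬝ᵥ rootVec R n b =
      (if b = a then 1 else 0) - if b = a' then 1 else 0 := by
  rw [sub_dotProduct, coordVec_dotProduct_rootVec, coordVec_dotProduct_rootVec]
  ring

theorem Fin.sub_one_ne_self (hn : 0 < n) (i : Fin (n + 1)) : i - 1 ≠ i := by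
  rw [Ne, sub_eq_self, Fin.one_eq_zero_iff]
  omega

theorem coordVec_sub_coordVec_dotProduct_rootVec_sub_one {R : Type*} [CommRing R] (hn : 0 < n)
    (i : Fin (n + 1)) : (coordVec R n (i - 1) - coordVec R n i) ⬝ᵥ rootVec R n (i - 1) = 1 := by
  rw [coordVec_sub_coordVec_dotProduct_rootVec, if_pos rfl, if_neg (Fin.sub_one_ne_self hn i),
    sub_zero]

def flagReflection (n : ℕ) (i : Fin (n + 1)) : Matrix (Fin n) (Fin n) ℤ :=
  reflectionMatrix (rootVec ℤ n (i - 1)) (coordVec ℤ n (i - 1) - coordVec ℤ n i)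

theorem map_flagReflection (i : Fin (n + 1)) :
    (flagReflection n i).map (Int.cast : ℤ → ℝ) =
      reflectionMatrix (rootVec ℝ n (i - 1)) (coordVec ℝ n (i - 1) - coordVec ℝ n i) := by
  change (flagReflection n i).map (Int.castRingHom ℝ) = _
  rw [flagReflection, map_reflectionMatrix, map_rootVec]
  congr 1
  ext c
  simp [← map_coordVec (Int.castRingHom ℝ)]

theorem det_flagReflection (hn : 0 < n) (i : Fin (n + 1)) : (flagReflection n i).det = -1 :=
  det_reflectionMatrix (coordVec_sub_coordVec_dotProduct_rootVec_sub_one hn i)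

theorem involutive_flagReflection (hn : 0 < n) (i : Fin (n + 1)) :
    Function.Involutive ((flagReflection n i).map (Int.cast : ℤ → ℝ)).mulVecLin := fun x => by
  rw [mulVecLin_apply, mulVecLin_apply, map_flagReflection]
  exact reflectionMatrix_mulVec_mulVec (coordVec_sub_coordVec_dotProduct_rootVec_sub_one hn i) x

theorem mapFlag_flagReflection (hn : 0 < n) {i k : Fin (n + 1)} (hk : k ≠ i) :
    mapFlag (flagReflection n i) (stdFlag (rootTuple n k)) = stdFlag (rootTuple n k) := by
  refine mapFlag_stdFlag_eq (involutive_flagReflection hn i) fun j => ?_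
  have hw : ∀ j' ≤ j, rootTuple n k j' ∈ Submodule.span ℝ (rootTuple n k '' {j' | j' ≤ j}) :=
    fun j' hj' => Submodule.subset_span ⟨j', hj', rfl⟩
  rw [mulVecLin_apply, map_flagReflection, reflectionMatrix_mulVec]
  refine sub_mem (hw j le_rfl) ?_
  rw [rootTuple, coordVec_sub_coordVec_dotProduct_rootVec]
  by_cases h₁ : k + Fin.castSucc j = i - 1
  · exact Submodule.smul_mem _ _ (h₁ ▸ hw j le_rfl)
  by_cases h₂ : k + Fin.castSucc j = i
  · have hj : (j : ℕ) ≠ 0 := fun hj => hk <| by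
      rwa [show Fin.castSucc j = 0 from Fin.ext hj, add_zero] at h₂
    let j' : Fin n := ⟨j - 1, by omega⟩
    have hj' : k + Fin.castSucc j' = i - 1 := by
      rw [← h₂, add_sub_assoc]
      congr 1
      ext
      simp [j', Fin.coe_sub_one, Fin.ext_iff, hj]
    exact Submodule.smul_mem _ _ (hj' ▸ hw j' (Fin.le_def.2 (by simp [j'])))
  · simp [h₁, h₂]

end FlagReflection

theorem stmt14_general (n : ℕ) (hn : 0 < n)
    (b : (Fin n → (Fin (n + 1) → Submodule ℝ (Fin n → ℝ))) → ℝ)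
    (hb : ∀ g : Matrix (Fin n) (Fin n) ℤ, (g.det = 1 ∨ g.det = -1) →
      ∀ G : Fin n → (Fin (n + 1) → Submodule ℝ (Fin n → ℝ)),
        (∀ i, IsCompleteFlag (G i)) →
        b (fun i => mapFlag g (G i)) = ((g.det : ℤ) : ℝ) * b G) :
    ∑ i : Fin (n + 1), (-1 : ℝ) ^ (i : ℕ) *
      b ((fun k => stdFlag (flagTuple n k)) ∘ i.succAbove) = 0 := by
  refine Finset.sum_eq_zero fun i _ => ?_
  set G := (fun k => stdFlag (flagTuple n k)) ∘ i.succAbove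
  have hG : ∀ j, IsCompleteFlag (G j) := fun j => by
    simpa only [G, Function.comp_apply, stdFlag_flagTuple] using
      isCompleteFlag_stdFlag (linearIndependent_rootTuple _)
  have hfix : (fun j => mapFlag (flagReflection n i) (G j)) = G := funext fun j => by
    simp only [G, Function.comp_apply, stdFlag_flagTuple,
      mapFlag_flagReflection hn (Fin.succAbove_ne i j)]
  have hodd := hb _ (Or.inr (det_flagReflection hn i)) G hG
  rw [hfix, det_flagReflection hn i, Int.cast_neg, Int.cast_one, neg_one_mul] at hodd
  rw [show b G = 0 by linarith, mul_zero]

/-- if `b`, defined on `n`-tuples of complete flags in `ℝⁿ`, is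
`PGL_n(ℤ)`-equivariant with values in `ℝ_ε` (i.e. `b(gG_1,…,gG_n) = sign(det g)·b(G)` for
all integer matrices `g` of determinant `±1`; note `sign(det g) = det g`), then the
coboundary of `b` vanishes at the tuple of flags `(F_0, …, F_n)` of `flagTuple`. -/
theorem stmt14 (n : ℕ) (hn : 0 < n) (he : Even n)
    (b : (Fin n → (Fin (n + 1) → Submodule ℝ (Fin n → ℝ))) → ℝ)
    (hb : ∀ g : Matrix (Fin n) (Fin n) ℤ, (g.det = 1 ∨ g.det = -1) →
      ∀ G : Fin n → (Fin (n + 1) → Submodule ℝ (Fin n → ℝ)),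
        (∀ i, IsCompleteFlag (G i)) →
        b (fun i => mapFlag g (G i)) = ((g.det : ℤ) : ℝ) * b G) :
    ∑ i : Fin (n + 1), (-1 : ℝ) ^ (i : ℕ) *
      b ((fun k => stdFlag (flagTuple n k)) ∘ i.succAbove) = 0 :=
  stmt14_general n hn b hb

end
end

section
/- Let n be a positive even integer, e_1,…,e_n the standard basis of ℝⁿ, e_0 = e_1+⋯+e_n, and let F_0,…,F_n be the complete flags F_0 = F(e_0,e_1,…,e_{n−1}), F_1 = F(e_1,e_2,…,e_n), and F_i = F(e_i,e_{i+1},…,e_n,e_0,e_1,…,e_{i−1}) for 2 ≤ i ≤ n. Then for each i ∈ {0,1,…,n} there exists g ∈ GL_n(ℤ) with det(g) = −1 such that g·F_j = F_j for every j ≠ i. -/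
noncomputable section

/-! Put `e'_0 = -e_0` and `e'_k = e_k` for `1 ≤ k ≤ n`, so that `e'_0 + ⋯ + e'_n = 0`. The integer
matrix `T` with `T e_k = e_{k+1}` for `k < n` and `T e_n = e'_0` then also sends `e'_0` to `e'_1`:
it permutes `e'_0, …, e'_n` cyclically. Hence `T^{n+1} = 1`, and since each `F_j` is, up to
signs of its basis vectors, the flag of `(e'_j, e'_{j+1}, …)`, `T · F_j = F_{j+1}`.
The reflection `D = diag(1, …, 1, -1)` fixes `e_1, …, e_{n-1}`, negates `e_n` and sends `e_0` to
`e_0 - 2 e_n`. In the basis of `F_j`, `j ≠ 0`, the vector `e_0` (if present) comes right after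
`e_n`, so `D` preserves `F_j`. Thus `g = T^i D T^{-i}` fixes every `F_j` with `j ≠ i`, and
`det g = det D = -1`. -/

open Matrix

lemma span_image_le_span_image_of_smul {R M ι : Type*} [Semiring R] [AddCommMonoid M]
    [Module R M] {w w' : ι → M} (h : ∀ t, ∃ c : R, w t = c • w' t) (S : Set ι) :
    Submodule.span R (w '' S) ≤ Submodule.span R (w' '' S) := by
  rw [Submodule.span_le]
  rintro _ ⟨t, ht, rfl⟩
  obtain ⟨c, hc⟩ := h t
  rw [hc]
  exact Submodule.smul_mem _ c (Submodule.subset_span ⟨t, ht, rfl⟩)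

lemma Matrix.map_intCast_mul {ι R : Type*} [Fintype ι] [Ring R] (A B : Matrix ι ι ℤ) :
    (A * B).map (Int.cast : ℤ → R) = A.map Int.cast * B.map Int.cast :=
  Matrix.map_mul (f := Int.castRingHom R)

section Flags

variable {n : ℕ}

lemma stdFlag_eq_of_smul {w w' : Fin n → Fin n → ℝ} (h : ∀ t, ∃ c : ℝ, w t = c • w' t)
    (h' : ∀ t, ∃ c : ℝ, w' t = c • w t) : stdFlag w = stdFlag w' :=
  funext fun _ => le_antisymm (span_image_le_span_image_of_smul h _)
    (span_image_le_span_image_of_smul h' _)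

lemma mapFlag_mul (A B : Matrix (Fin n) (Fin n) ℤ) (s : Fin (n + 1) → Submodule ℝ (Fin n → ℝ)) :
    mapFlag (A * B) s = mapFlag A (mapFlag B s) := by
  funext i
  simp only [mapFlag, Matrix.map_intCast_mul, Matrix.mulVecLin_mul,
    Submodule.map_comp]

lemma mapFlag_one (s : Fin (n + 1) → Submodule ℝ (Fin n → ℝ)) : mapFlag 1 s = s := by
  funext i
  simp [mapFlag]

lemma mapFlag_mono (g : Matrix (Fin n) (Fin n) ℤ) : Monotone (mapFlag g) :=
  fun _ _ h i => Submodule.map_mono (h i)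

lemma mapFlag_eq_self_of_mul_self_eq_one {g : Matrix (Fin n) (Fin n) ℤ}
    {s : Fin (n + 1) → Submodule ℝ (Fin n → ℝ)} (hg : g * g = 1) (h : mapFlag g s ≤ s) :
    mapFlag g s = s := by
  refine le_antisymm h ?_
  calc s = mapFlag g (mapFlag g s) := by rw [← mapFlag_mul, hg, mapFlag_one]
    _ ≤ mapFlag g s := mapFlag_mono g h

lemma mapFlag_stdFlag (g : Matrix (Fin n) (Fin n) ℤ) (w : Fin n → Fin n → ℝ) :
    mapFlag g (stdFlag w) = stdFlag fun t => g.map (Int.cast : ℤ → ℝ) *ᵥ w t := by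
  funext i
  simp only [mapFlag, stdFlag, Submodule.map_span, Set.image_image, Matrix.mulVecLin_apply]

lemma mapFlag_stdFlag_le (g : Matrix (Fin n) (Fin n) ℤ) (w : Fin n → Fin n → ℝ)
    (h : ∀ t, g.map (Int.cast : ℤ → ℝ) *ᵥ w t ∈ Submodule.span ℝ (w '' Set.Iic t)) :
    mapFlag g (stdFlag w) ≤ stdFlag w := by
  intro i
  rw [mapFlag_stdFlag, stdFlag, Submodule.span_le]
  rintro _ ⟨t, ht, rfl⟩
  refine Submodule.span_mono (Set.image_mono fun s hs => ?_) (h t)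
  exact lt_of_le_of_lt (Fin.le_def.mp hs) ht

end Flags

variable {m : ℕ}

-- Here `n = m + 1` and coordinates are 0-based: `e_k = Pi.single (k - 1) 1`, and
-- `signedCyc m k = e'_k`.
def signedCyc (m : ℕ) : Fin (m + 2) → Fin (m + 1) → ℝ :=
  Fin.cases (-1) fun k => Pi.single k 1

@[simp] lemma signedCyc_zero : signedCyc m 0 = -1 := rfl

@[simp] lemma signedCyc_succ (k : Fin (m + 1)) : signedCyc m k.succ = Pi.single k 1 := rfl

@[simp] lemma signedCyc_one : signedCyc m 1 = Pi.single 0 1 := by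
  rw [← Fin.succ_zero_eq_one, signedCyc_succ]

@[simp] lemma signedCyc_last : signedCyc m (Fin.last (m + 1)) = Pi.single (Fin.last m) 1 := by
  rw [← Fin.succ_last, signedCyc_succ]

lemma cyc_eq_smul_signedCyc (k : Fin (m + 2)) :
    cyc (m + 1) k = (if k = 0 then -1 else 1 : ℝ) • signedCyc m k := by
  cases k using Fin.cases with
  | zero => funext a; simp [cyc, signedCyc]
  | succ k => simp [cyc, signedCyc, Fin.succ_ne_zero]

lemma stdFlag_flagTuple_s15 (j : Fin (m + 2)) :
    stdFlag (flagTuple (m + 1) j) = stdFlag fun t => signedCyc m (j + t.castSucc) := by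
  have hsign (k : Fin (m + 2)) : (if k = 0 then -1 else 1 : ℝ) * (if k = 0 then -1 else 1) = 1 := by
    split_ifs <;> norm_num
  refine stdFlag_eq_of_smul (fun t => ⟨_, cyc_eq_smul_signedCyc _⟩)
    fun t => ⟨if j + t.castSucc = 0 then -1 else 1, ?_⟩
  rw [flagTuple, cyc_eq_smul_signedCyc, smul_smul, hsign, one_smul]

def shiftMatrix (m : ℕ) : Matrix (Fin (m + 1)) (Fin (m + 1)) ℤ :=
  Matrix.of fun a => Fin.lastCases (-1) fun b => if a = b.succ then 1 else 0

lemma shiftMatrix_mulVec (v : Fin (m + 1) → ℝ) :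
    (shiftMatrix m).map (Int.cast : ℤ → ℝ) *ᵥ v =
      Fin.cases 0 (fun a => v a.castSucc) - fun _ => v (Fin.last m) := by
  funext a
  cases a using Fin.cases <;>
    simp [shiftMatrix, mulVec, dotProduct, Fin.sum_univ_castSucc, (Fin.succ_ne_zero _).symm,
      sub_eq_add_neg]

lemma shiftMatrix_mulVec_signedCyc (k : Fin (m + 2)) :
    (shiftMatrix m).map (Int.cast : ℤ → ℝ) *ᵥ signedCyc m k = signedCyc m (k + 1) := by
  rw [shiftMatrix_mulVec]
  funext a
  cases k using Fin.cases with
  | zero =>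
    cases a using Fin.cases <;> simp
  | succ k =>
    cases k using Fin.lastCases with
    | last =>
      rw [show (Fin.last m).succ + 1 = 0 by rw [Fin.succ_last, Fin.last_add_one]]
      cases a using Fin.cases <;> simp
    | cast k =>
      rw [Fin.succ_castSucc, Fin.coeSucc_eq_succ]
      cases a using Fin.cases <;> simp [signedCyc, Pi.single_apply, Fin.castSucc_ne_last]

open Fin.NatCast in
lemma shiftMatrix_pow_mulVec_signedCyc (N : ℕ) (k : Fin (m + 2)) :
    (shiftMatrix m ^ N).map (Int.cast : ℤ → ℝ) *ᵥ signedCyc m k = signedCyc m (k + N) := by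
  induction N generalizing k with
  | zero => simp
  | succ N ih =>
    rw [pow_succ', map_intCast_mul, ← mulVec_mulVec, ih, shiftMatrix_mulVec_signedCyc,
      Nat.cast_succ, add_assoc]

open Fin.NatCast in
lemma shiftMatrix_pow_eq_one {N : ℕ} (hN : m + 2 ∣ N) : shiftMatrix m ^ N = 1 := by
  apply Matrix.map_injective (f := (Int.cast : ℤ → ℝ)) Int.cast_injective
  refine Matrix.ext_of_mulVec_single fun b => ?_
  have h := shiftMatrix_pow_mulVec_signedCyc (m := m) N b.succ
  rw [(Fin.natCast_eq_zero).mpr hN, add_zero] at h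
  dsimp only
  rw [Matrix.map_one _ Int.cast_zero Int.cast_one, one_mulVec]
  simpa [signedCyc] using h

lemma shiftMatrix_pow_mul_pow_neg (k : Fin (m + 2)) :
    shiftMatrix m ^ (k : ℕ) * shiftMatrix m ^ ((-k : Fin (m + 2)) : ℕ) = 1 := by
  rw [← pow_add]
  refine shiftMatrix_pow_eq_one (Nat.dvd_of_mod_eq_zero ?_)
  rw [← Fin.val_add, add_neg_cancel, Fin.val_zero]

open Fin.NatCast in
lemma mapFlag_shiftMatrix_pow (N : ℕ) (j : Fin (m + 2)) :
    mapFlag (shiftMatrix m ^ N) (stdFlag (flagTuple (m + 1) j)) =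
      stdFlag (flagTuple (m + 1) (j + N)) := by
  simp only [stdFlag_flagTuple_s15, mapFlag_stdFlag, shiftMatrix_pow_mulVec_signedCyc]
  congr 1
  funext t
  rw [add_right_comm]

def reflMatrix (m : ℕ) : Matrix (Fin (m + 1)) (Fin (m + 1)) ℤ :=
  Matrix.diagonal (Fin.lastCases (-1) 1)

lemma det_reflMatrix : (reflMatrix m).det = -1 := by
  simp [reflMatrix, Fin.prod_univ_castSucc]

lemma reflMatrix_mul_self : reflMatrix m * reflMatrix m = 1 := by
  rw [reflMatrix, diagonal_mul_diagonal, ← diagonal_one]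
  congr 1
  funext b
  cases b using Fin.lastCases <;> simp

lemma reflMatrix_mulVec_signedCyc_succ (k : Fin (m + 1)) :
    (reflMatrix m).map (Int.cast : ℤ → ℝ) *ᵥ signedCyc m k.succ =
      (if k = Fin.last m then -1 else 1 : ℝ) • signedCyc m k.succ := by
  rw [reflMatrix, diagonal_map (by simp)]
  funext a
  rw [mulVec_diagonal]
  by_cases ha : a = k
  · subst ha
    cases a using Fin.lastCases <;> simp [signedCyc]
  · simp [signedCyc, ha]

lemma reflMatrix_mulVec_signedCyc_zero :
    (reflMatrix m).map (Int.cast : ℤ → ℝ) *ᵥ signedCyc m 0 =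
      signedCyc m 0 + (2 : ℝ) • signedCyc m (Fin.last (m + 1)) := by
  rw [reflMatrix, diagonal_map (by simp)]
  funext a
  rw [mulVec_diagonal]
  cases a using Fin.lastCases <;> norm_num

lemma exists_le_add_castSucc_eq_last {j : Fin (m + 2)} {t : Fin (m + 1)} (hj : j ≠ 0)
    (ht : j + t.castSucc = 0) : ∃ s ≤ t, j + s.castSucc = Fin.last (m + 1) := by
  cases t using Fin.cases with
  | zero => exact absurd (by simpa using ht) hj
  | succ s =>
    refine ⟨s.castSucc, Fin.castSucc_lt_succ.le, add_right_cancel (b := 1) ?_⟩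
    rw [Fin.last_add_one, add_assoc, Fin.coeSucc_eq_succ, Fin.succ_castSucc, ht]

lemma mapFlag_reflMatrix {j : Fin (m + 2)} (hj : j ≠ 0) :
    mapFlag (reflMatrix m) (stdFlag (flagTuple (m + 1) j)) = stdFlag (flagTuple (m + 1) j) := by
  refine mapFlag_eq_self_of_mul_self_eq_one reflMatrix_mul_self ?_
  rw [stdFlag_flagTuple_s15]
  refine mapFlag_stdFlag_le _ _ fun t => ?_
  have mem {s} (hs : s ≤ t) : signedCyc m (j + s.castSucc) ∈
      Submodule.span ℝ ((fun t => signedCyc m (j + t.castSucc)) '' Set.Iic t) :=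
    Submodule.subset_span ⟨s, hs, rfl⟩
  cases hk : j + t.castSucc using Fin.cases with
  | zero =>
    obtain ⟨s, hs, hjs⟩ := exists_le_add_castSucc_eq_last hj hk
    rw [reflMatrix_mulVec_signedCyc_zero]
    exact add_mem (hk ▸ mem le_rfl) (Submodule.smul_mem _ _ (hjs ▸ mem hs))
  | succ k =>
    rw [reflMatrix_mulVec_signedCyc_succ]
    exact Submodule.smul_mem _ _ (hk ▸ mem le_rfl)

theorem stmt15_general (n : ℕ) (hn : 0 < n) (i : Fin (n + 1)) :
    ∃ g : Matrix (Fin n) (Fin n) ℤ, g.det = -1 ∧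
      ∀ j : Fin (n + 1), j ≠ i →
        mapFlag g (stdFlag (flagTuple n j)) = stdFlag (flagTuple n j) := by
  obtain ⟨m, rfl⟩ := Nat.exists_eq_add_one_of_ne_zero hn.ne'
  refine ⟨shiftMatrix m ^ (i : ℕ) * reflMatrix m * shiftMatrix m ^ ((-i : Fin (m + 2)) : ℕ),
    ?_, fun j hj => ?_⟩
  · rw [det_mul, det_mul, det_reflMatrix, mul_right_comm, ← det_mul,
      shiftMatrix_pow_mul_pow_neg, det_one, one_mul]
  · have hji : j - i ≠ 0 := sub_ne_zero.mpr hj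
    rw [mapFlag_mul, mapFlag_mul, mapFlag_shiftMatrix_pow, Fin.cast_val_eq_self, ← sub_eq_add_neg,
      mapFlag_reflMatrix hji, mapFlag_shiftMatrix_pow, Fin.cast_val_eq_self, sub_add_cancel]

/-- for the complete flags `F_0, …, F_n` of `flagTuple` and each index `i`,
there is an integer matrix `g` of determinant `−1` fixing `F_j` for every `j ≠ i`. -/
theorem stmt15 (n : ℕ) (hn : 0 < n) (he : Even n) (i : Fin (n + 1)) :
    ∃ g : Matrix (Fin n) (Fin n) ℤ, g.det = -1 ∧
      ∀ j : Fin (n + 1), j ≠ i →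
        mapFlag g (stdFlag (flagTuple n j)) = stdFlag (flagTuple n j) :=
  stmt15_general n hn i

end
end

section
/- Let n ≥ 1 and let v_0,…,v_n ∈ ℝⁿ be such that 0 lies in the interior of the convex hull of {v_0,…,v_n}. Then the quantity (−1)^i · ori(v_0,…,v̂_i,…,v_n) is nonzero and independent of i ∈ {0,…,n}; i.e. every n of the vectors form a basis of ℝⁿ and (−1)^i ori(v_0,…,v̂_i,…,v_n) = (−1)^j ori(v_0,…,v̂_j,…,v_n) for all i, j. -/
/-!
If `0` is interior to the convex hull of `v₀, …, vₙ ∈ ℝⁿ`, the `vᵢ` are affinely independent and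
`0 = ∑ λᵢ vᵢ` with barycentric coordinates `λᵢ > 0`. The matrix `A` with columns `(1, vᵢ)` then
satisfies `A λ = e₀`, so `det A • λ = adj A e₀`, whose `i`-th entry is the cofactor
`(-1)ⁱ det(v₀, …, v̂ᵢ, …, vₙ)`. As `λᵢ > 0` and `det A ≠ 0`, every `(-1)ⁱ ori(v₀, …, v̂ᵢ, …, vₙ)`
equals the sign of `det A`.
-/

noncomputable section

open Matrix Set Module

namespace Real

lemma sign_mul_of_pos {c : ℝ} (x : ℝ) (hc : 0 < c) : sign (x * c) = sign x := by
  rcases lt_trichotomy x 0 with h | rfl | h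
  · rw [sign_of_neg h, sign_of_neg (mul_neg_of_neg_of_pos h hc)]
  · rw [zero_mul]
  · rw [sign_of_pos h, sign_of_pos (mul_pos h hc)]

lemma sign_neg_one_pow_mul (k : ℕ) (x : ℝ) : sign ((-1) ^ k * x) = (-1) ^ k * sign x := by
  rcases neg_one_pow_eq_or ℝ k with h | h <;> simp [h, sign_neg]

end Real

section ConvexHull

variable {E : Type*} [NormedAddCommGroup E] [NormedSpace ℝ E]
  {ι : Type*} [Fintype ι] {v : ι → E} {x : E}

lemma affineIndependent_of_mem_interior_convexHull (hcard : Fintype.card ι = finrank ℝ E + 1)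
    (hx : x ∈ interior (convexHull ℝ (range v))) : AffineIndependent ℝ v := by
  have hspan : affineSpan ℝ (range v) = ⊤ := affineSpan_eq_top_of_nonempty_interior ⟨x, hx⟩
  rw [affineIndependent_iff_finrank_vectorSpan_eq ℝ v hcard, ← direction_affineSpan, hspan,
    AffineSubspace.direction_top, finrank_top]

lemma exists_pos_weights_of_mem_interior_convexHull (hcard : Fintype.card ι = finrank ℝ E + 1)
    (hx : x ∈ interior (convexHull ℝ (range v))) :
    ∃ c : ι → ℝ, (∀ i, 0 < c i) ∧ ∑ i, c i = 1 ∧ ∑ i, c i • v i = x := by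
  let b : AffineBasis ι ℝ E :=
    ⟨v, affineIndependent_of_mem_interior_convexHull hcard hx,
      affineSpan_eq_top_of_nonempty_interior ⟨x, hx⟩⟩
  have hxb : x ∈ interior (convexHull ℝ (range b)) := hx
  rw [b.interior_convexHull] at hxb
  exact ⟨fun i => b.coord i x, hxb, b.sum_coord_apply_eq_one x,
    b.linear_combination_coord_eq_self x⟩

end ConvexHull

section HomogeneousMatrix

variable {R : Type*} [CommRing R] {n : ℕ} {ι : Type*}

def homogeneousMatrix (v : ι → Fin n → R) : Matrix (Fin (n + 1)) ι R :=
  Matrix.of fun i j => (Fin.cons 1 (v j) : Fin (n + 1) → R) i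

lemma homogeneousMatrix_mulVec [Fintype ι] (v : ι → Fin n → R) (c : ι → R) :
    homogeneousMatrix v *ᵥ c = Fin.cons (∑ j, c j) (∑ j, c j • v j) := by
  ext i
  cases i using Fin.cases <;>
    simp [homogeneousMatrix, mulVec, dotProduct, Finset.sum_apply, mul_comm]

lemma homogeneousMatrix_submatrix_succ {κ : Type*} (v : ι → Fin n → R) (e : κ → ι) :
    (homogeneousMatrix v).submatrix Fin.succ e = Matrix.of fun k j => v (e j) k := by
  ext k j
  simp [homogeneousMatrix]

lemma det_homogeneousMatrix_ne_zero {K : Type*} [Field K] {v : Fin (n + 1) → Fin n → K}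
    (hv : AffineIndependent K v) : (homogeneousMatrix v).det ≠ 0 := by
  rw [Ne, ← exists_mulVec_eq_zero_iff]
  rintro ⟨g, hg0, hg⟩
  rw [homogeneousMatrix_mulVec] at hg
  obtain ⟨hsum, hcomb⟩ := Matrix.cons_eq_zero_iff.1 hg
  exact hg0 <| funext fun j =>
    affineIndependent_iff.1 hv Finset.univ g hsum hcomb j (Finset.mem_univ j)

lemma det_homogeneousMatrix_mul_eq (v : Fin (n + 1) → Fin n → R) {c : Fin (n + 1) → R}
    (hsum : ∑ j, c j = 1) (hcomb : ∑ j, c j • v j = 0) (i : Fin (n + 1)) :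
    (homogeneousMatrix v).det * c i =
      (-1) ^ (i : ℕ) * (Matrix.of fun k j => v (i.succAbove j) k).det := by
  set A := homogeneousMatrix v
  have hAc : A *ᵥ c = Pi.single 0 1 := by
    rw [homogeneousMatrix_mulVec, hsum, hcomb]
    ext k
    cases k using Fin.cases <;> simp
  have hcramer := congrFun (congrArg (adjugate A *ᵥ ·) hAc) i
  simp only [mulVec_mulVec, adjugate_mul, smul_mulVec, one_mulVec, Pi.smul_apply, smul_eq_mul,
    mulVec_single_one] at hcramer
  rw [hcramer, col_apply, adjugate_fin_succ_eq_det_submatrix, Fin.succAbove_zero,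
    homogeneousMatrix_submatrix_succ]
  simp

lemma neg_one_pow_mul_sign_det_eq_sign_det_homogeneousMatrix (v : Fin (n + 1) → Fin n → ℝ)
    {c : Fin (n + 1) → ℝ} (hpos : ∀ j, 0 < c j) (hsum : ∑ j, c j = 1)
    (hcomb : ∑ j, c j • v j = 0) (i : Fin (n + 1)) :
    (-1) ^ (i : ℕ) * Real.sign (Matrix.of fun k j => v (i.succAbove j) k).det =
      Real.sign (homogeneousMatrix v).det := by
  rw [← Real.sign_neg_one_pow_mul, ← det_homogeneousMatrix_mul_eq v hsum hcomb i,
    Real.sign_mul_of_pos _ (hpos i)]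

end HomogeneousMatrix

theorem stmt16_general (n : ℕ) (v : Fin (n + 1) → (Fin n → ℝ))
    (hv : (0 : Fin n → ℝ) ∈ interior (convexHull ℝ (Set.range v))) :
    ∀ i j : Fin (n + 1),
      oriV (v ∘ i.succAbove) ≠ 0 ∧
      (-1 : ℝ) ^ (i : ℕ) * oriV (v ∘ i.succAbove) =
        (-1 : ℝ) ^ (j : ℕ) * oriV (v ∘ j.succAbove) := by
  have hcard : Fintype.card (Fin (n + 1)) = finrank ℝ (Fin n → ℝ) + 1 := by simp
  obtain ⟨c, hpos, hsum, hcomb⟩ := exists_pos_weights_of_mem_interior_convexHull hcard hv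
  have hdet := det_homogeneousMatrix_ne_zero
    (affineIndependent_of_mem_interior_convexHull hcard hv)
  have hsign (i : Fin (n + 1)) :
      (-1 : ℝ) ^ (i : ℕ) * oriV (v ∘ i.succAbove) = Real.sign (homogeneousMatrix v).det :=
    neg_one_pow_mul_sign_det_eq_sign_det_homogeneousMatrix v hpos hsum hcomb i
  intro i j
  refine ⟨fun hzero => hdet ?_, by rw [hsign, hsign]⟩
  rw [← Real.sign_eq_zero_iff, ← hsign i, hzero, mul_zero]

/-- if `0` lies in the interior of the convex hull of `{v_0,…,v_n} ⊆ ℝⁿ`,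
then `(−1)^i · ori(v_0,…,v̂_i,…,v_n)` is nonzero and independent of `i`. -/
theorem stmt16 (n : ℕ) (hn : 1 ≤ n) (v : Fin (n + 1) → (Fin n → ℝ))
    (hv : (0 : Fin n → ℝ) ∈ interior (convexHull ℝ (Set.range v))) :
    ∀ i j : Fin (n + 1),
      oriV (v ∘ i.succAbove) ≠ 0 ∧
      (-1 : ℝ) ^ (i : ℕ) * oriV (v ∘ i.succAbove) =
        (-1 : ℝ) ^ (j : ℕ) * oriV (v ∘ j.succAbove) :=
  stmt16_general n v hv

end
end
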